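/- arXiv:2503.02035 — 3 statements merged into one kernel-verified Lean document; each statement's English description precedes it below -/
import Mathlib

section
/- Assume 𝕜 contains a primitive d-th root of unity ξ. Then in Y_{d,n}(q), for every set partition A ∈ SetPar_n, e(A) = Σ e(j), the sum over all j ∈ (ℤ/dℤ)^n such that a ∼_A b implies j_a = j_b. -/
open scoped Classical

noncomputable section

namespace YH

/-- Generators of the Yokonuma–Hecke algebra (0-based indexing):
`g a h` corresponds to the generator `g_{a+1}` of the paper, and `t a` to `t_{a+1}`. -/
inductive Gen (n : ℕ) : Type
  | g : (a : ℕ) → a + 1 < n → Gen n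
  | t : Fin n → Gen n

variable (𝕜 : Type) [Field 𝕜] (d n : ℕ) (q : 𝕜)

/-- The free algebra on the generators. -/
abbrev F : Type := FreeAlgebra 𝕜 (Gen n)

def G (a : ℕ) (h : a + 1 < n) : F 𝕜 n := FreeAlgebra.ι 𝕜 (Gen.g a h)

def T (a : Fin n) : F 𝕜 n := FreeAlgebra.ι 𝕜 (Gen.t a)

/-- The simple transposition `σ_a = (a, a+1)` (0-based). -/
def sw (a : ℕ) (h : a + 1 < n) : Equiv.Perm (Fin n) :=
  Equiv.swap ⟨a, by omega⟩ ⟨a + 1, h⟩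

/-- The element `e_a = (1/d) Σ_{r=0}^{d-1} t_a^r t_{a+1}^{-r}` of the free algebra, where
`t_{a+1}^{-r}` is represented by `t_{a+1}^{(d-r) % d}` (they agree once `t^d = 1` is imposed). -/
def Efree (a : ℕ) (h : a + 1 < n) : F 𝕜 n :=
  (d : 𝕜)⁻¹ • ∑ r ∈ Finset.range d,
    T 𝕜 n ⟨a, by omega⟩ ^ r * T 𝕜 n ⟨a + 1, h⟩ ^ ((d - r) % d)

/-- The defining relations of the Yokonuma–Hecke algebra `Y_{d,n}(q)`. -/
inductive Rel : F 𝕜 n → F 𝕜 n → Prop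
  | torder (a : Fin n) : Rel (T 𝕜 n a ^ d) 1
  | tcomm (a b : Fin n) : Rel (T 𝕜 n a * T 𝕜 n b) (T 𝕜 n b * T 𝕜 n a)
  | tg (a : Fin n) (b : ℕ) (hb : b + 1 < n) :
      Rel (T 𝕜 n a * G 𝕜 n b hb) (G 𝕜 n b hb * T 𝕜 n (sw n b hb a))
  | quad (a : ℕ) (h : a + 1 < n) :
      Rel (G 𝕜 n a h ^ 2)
        (algebraMap 𝕜 (F 𝕜 n) q + (q - 1) • (Efree 𝕜 d n a h * G 𝕜 n a h))
  | braid (a : ℕ) (h : a + 2 < n) :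
      Rel (G 𝕜 n a (by omega) * G 𝕜 n (a + 1) h * G 𝕜 n a (by omega))
        (G 𝕜 n (a + 1) h * G 𝕜 n a (by omega) * G 𝕜 n (a + 1) h)
  | gcomm (a b : ℕ) (ha : a + 1 < n) (hb : b + 1 < n) (hab : a + 1 < b) :
      Rel (G 𝕜 n a ha * G 𝕜 n b hb) (G 𝕜 n b hb * G 𝕜 n a ha)

/-- The Yokonuma–Hecke algebra `Y_{d,n}(q)`. -/
abbrev Y : Type := RingQuot (Rel 𝕜 d n q)

def π : F 𝕜 n →ₐ[𝕜] Y 𝕜 d n q := RingQuot.mkAlgHom 𝕜 (Rel 𝕜 d n q)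

/-- The generator `g_{a+1}` of `Y_{d,n}(q)` (0-based: `g a h`). -/
def g (a : ℕ) (h : a + 1 < n) : Y 𝕜 d n q := π 𝕜 d n q (G 𝕜 n a h)

/-- The generator `t_{a+1}` of `Y_{d,n}(q)` (0-based: `t a`). -/
def t (a : Fin n) : Y 𝕜 d n q := π 𝕜 d n q (T 𝕜 n a)

/-- The idempotent `e_a` in `Y_{d,n}(q)`. -/
def eA (a : ℕ) (h : a + 1 < n) : Y 𝕜 d n q := π 𝕜 d n q (Efree 𝕜 d n a h)

/-- `(1/d) Σ_{r=0}^{d-1} t_a^r t_b^{-r}` in `Y_{d,n}(q)`, with `t_b^{-r}` written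
`t_b^{(d-r) % d}`. -/
def eabAux (a b : Fin n) : Y 𝕜 d n q :=
  (d : 𝕜)⁻¹ • ∑ r ∈ Finset.range d, t 𝕜 d n q a ^ r * t 𝕜 d n q b ^ ((d - r) % d)

/-- The element `e_{ab}` (symmetrized so that `e_{ba} = e_{ab}`). -/
def eab (a b : Fin n) : Y 𝕜 d n q :=
  if (a : ℕ) ≤ (b : ℕ) then eabAux 𝕜 d n q a b else eabAux 𝕜 d n q b a

/-- Set partitions of `{1, …, n}` are identified with equivalence relations, i.e. with
`Setoid (Fin n)`; `a ∼_A b` is `A.r a b`. -/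
abbrev SetPar (n : ℕ) := Setoid (Fin n)

/-- `e(A) = ∏_{a ∼_A b, a ≠ b} e_{ab}` (the factors commute, so the product may be
taken in any fixed order). -/
def eSet (A : Setoid (Fin n)) : Y 𝕜 d n q :=
  (((List.finRange n) ×ˢ (List.finRange n)).map
    (fun p => if A.r p.1 p.2 ∧ p.1 ≠ p.2 then eab 𝕜 d n q p.1 p.2 else 1)).prod

/-- `e(j) = ∏_{a=1}^n ((1/d) Σ_{r=0}^{d-1} ξ^{-j_a r} t_a^r)` for `j ∈ (ℤ/dℤ)^n`. -/
def ej (ξ : 𝕜) (j : Fin n → ZMod d) : Y 𝕜 d n q :=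
  ((List.finRange n).map (fun a =>
    (d : 𝕜)⁻¹ • ∑ r ∈ Finset.range d,
      ξ ^ (((-(j a)) * (r : ZMod d)).val) • t 𝕜 d n q a ^ r)).prod

/-- `J_A = { j ∈ (ℤ/dℤ)^n : j_a = j_b ⇔ a ∼_A b }`. -/
def JA [NeZero d] (A : Setoid (Fin n)) : Finset (Fin n → ZMod d) :=
  Finset.univ.filter (fun j => ∀ a b : Fin n, j a = j b ↔ A.r a b)

/-- `ē(A) = Σ_{j ∈ J_A} e(j)`. -/
def ebar [NeZero d] (ξ : 𝕜) (A : Setoid (Fin n)) : Y 𝕜 d n q :=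
  ∑ j ∈ JA d n A, ej 𝕜 d n q ξ j

/-- The Jucys–Murphy elements: `X 0 = X_1 = 1` and `X (a+1) = X_{a+2} = q⁻¹ g_{a+1} X_{a+1} g_{a+1}`
(0-based indexing: `X a h` is the paper's `X_{a+1}`). -/
def X : (a : ℕ) → a < n → Y 𝕜 d n q
  | 0, _ => 1
  | a + 1, h => q⁻¹ • (g 𝕜 d n q a h * X a (by omega) * g 𝕜 d n q a h)

/-- The action of a permutation on set partitions (equivalence relations). -/
def permSetoid (σ : Equiv.Perm (Fin n)) (A : Setoid (Fin n)) : Setoid (Fin n) where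
  r x y := A.r (σ.symm x) (σ.symm y)
  iseqv := ⟨fun _ => A.iseqv.refl _, fun h => A.iseqv.symm h, fun h h' => A.iseqv.trans h h'⟩

instance : Finite (Setoid (Fin n)) :=
  Finite.of_injective (fun A : Setoid (Fin n) => A.r)
    (fun A B h => by cases A; cases B; simp only at h; subst h; rfl)

noncomputable instance : Fintype (Setoid (Fin n)) := Fintype.ofFinite _

section Aux

variable [NeZero d] (ξ : 𝕜)

private lemma ya_pow_mod {M : Type*} [Monoid M] {x : M} {e : ℕ} (hx : x ^ e = 1) (m : ℕ) :
    x ^ (m % e) = x ^ m := by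
  conv_rhs => rw [← Nat.mod_add_div m e, pow_add, pow_mul, hx, one_pow, mul_one]

private lemma ya_sum_range_zmod {M : Type*} [AddCommMonoid M] (f : ZMod d → M) :
    ∑ r ∈ Finset.range d, f (r : ZMod d) = ∑ r : ZMod d, f r := by
  exact Finset.sum_nbij' (i := fun r => (r : ZMod d)) (j := ZMod.val)
    (fun a _ => Finset.mem_univ _) (fun a _ => Finset.mem_range.mpr (ZMod.val_lt a))
    (fun a ha => ZMod.val_natCast_of_lt (Finset.mem_range.mp ha))
    (fun a _ => ZMod.natCast_rightInverse a) (fun a _ => rfl)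

private lemma ya_t_comm (a b : Fin n) :
    t 𝕜 d n q a * t 𝕜 d n q b = t 𝕜 d n q b * t 𝕜 d n q a := by
  have h := RingQuot.mkAlgHom_rel 𝕜 (Rel.tcomm a b : Rel 𝕜 d n q _ _)
  simp only [map_mul] at h
  exact h

private lemma ya_t_pow_d (a : Fin n) : t 𝕜 d n q a ^ d = 1 := by
  have h := RingQuot.mkAlgHom_rel 𝕜 (Rel.torder a : Rel 𝕜 d n q _ _)
  simp only [map_pow, map_one] at h
  exact h

private lemma ya_t_valadd (a : Fin n) (r s : ZMod d) :
    t 𝕜 d n q a ^ r.val * t 𝕜 d n q a ^ s.val = t 𝕜 d n q a ^ (r + s).val := by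
  rw [← pow_add, ← ya_pow_mod (ya_t_pow_d 𝕜 d n q a) (r.val + s.val), ZMod.val_add]

private lemma ya_chi_mul (hξd : ξ ^ d = 1) (u v : ZMod d) :
    ξ ^ u.val * ξ ^ v.val = ξ ^ (u + v).val := by
  rw [← pow_add, ← ya_pow_mod hξd (u.val + v.val), ZMod.val_add]

private lemma ya_chi_sum (hξ : IsPrimitiveRoot ξ d) (c : ZMod d) :
    ∑ r : ZMod d, ξ ^ (c * r).val = if c = 0 then (d : 𝕜) else 0 := by
  have hξd : ξ ^ d = 1 := hξ.pow_eq_one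
  have hterm : ∀ r : ZMod d, ξ ^ (c * r).val = (ξ ^ c.val) ^ r.val := by
    intro r
    rw [← pow_mul, ZMod.val_mul, ya_pow_mod hξd]
  simp only [hterm]
  rw [← ya_sum_range_zmod (f := fun r : ZMod d => (ξ ^ c.val) ^ r.val)]
  have hcast : ∀ k ∈ Finset.range d, (ξ ^ c.val) ^ ((k : ZMod d).val) = (ξ ^ c.val) ^ k :=
    fun k hk => by rw [ZMod.val_natCast_of_lt (Finset.mem_range.mp hk)]
  rw [Finset.sum_congr rfl hcast]
  by_cases hc : c = 0
  · subst hc; simp [ZMod.val_zero]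
  · have h0 : 0 < c.val := Nat.pos_of_ne_zero (fun h => hc ((ZMod.val_eq_zero c).mp h))
    have h1 : ξ ^ c.val ≠ 1 := hξ.pow_ne_one_of_pos_of_lt h0.ne' (ZMod.val_lt c)
    rw [if_neg hc, geom_sum_eq h1]
    have hz : (ξ ^ c.val) ^ d = 1 := by
      rw [← pow_mul, mul_comm, pow_mul, hξd, one_pow]
    rw [hz]; simp

private lemma ya_chi_sum_neg (hξ : IsPrimitiveRoot ξ d) (c : ZMod d) :
    ∑ i : ZMod d, ξ ^ (c * (-i)).val = if c = 0 then (d : 𝕜) else 0 := by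
  rw [← ya_chi_sum 𝕜 d ξ hξ c]
  exact Fintype.sum_equiv (Equiv.neg (ZMod d)) _ _ (fun i => rfl)

/-- The idempotent `(1/d) ∑_r ξ^{-i r} t_a^r`. -/
def Pel (a : Fin n) (i : ZMod d) : Y 𝕜 d n q :=
  (d : 𝕜)⁻¹ • ∑ r ∈ Finset.range d, ξ ^ (((-i) * (r : ZMod d)).val) • t 𝕜 d n q a ^ r

private lemma ya_ej_eq (j : Fin n → ZMod d) :
    ej 𝕜 d n q ξ j = ((List.finRange n).map (fun a => Pel 𝕜 d n q ξ a (j a))).prod := rfl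

private lemma ya_Pel_eq (a : Fin n) (i : ZMod d) :
    Pel 𝕜 d n q ξ a i
      = (d : 𝕜)⁻¹ • ∑ r : ZMod d, ξ ^ ((-i * r).val) • t 𝕜 d n q a ^ r.val := by
  rw [Pel, ← ya_sum_range_zmod (f := fun r : ZMod d => ξ ^ ((-i * r).val) • t 𝕜 d n q a ^ r.val)]
  congr 1
  refine Finset.sum_congr rfl (fun k hk => ?_)
  rw [ZMod.val_natCast_of_lt (Finset.mem_range.mp hk)]

private lemma ya_Pel_mul_Pel (hdk : (d : 𝕜) ≠ 0) (hξ : IsPrimitiveRoot ξ d)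
    (a : Fin n) (i i' : ZMod d) :
    Pel 𝕜 d n q ξ a i * Pel 𝕜 d n q ξ a i'
      = if i = i' then Pel 𝕜 d n q ξ a i else 0 := by
  have hξd : ξ ^ d = 1 := hξ.pow_eq_one
  have expand : Pel 𝕜 d n q ξ a i * Pel 𝕜 d n q ξ a i'
      = ((d : 𝕜)⁻¹ * (d : 𝕜)⁻¹) • ∑ r : ZMod d, ∑ s : ZMod d,
          (ξ ^ ((-i * r).val) * ξ ^ ((-i' * s).val)) •
            (t 𝕜 d n q a ^ r.val * t 𝕜 d n q a ^ s.val) := by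
    rw [ya_Pel_eq, ya_Pel_eq, smul_mul_assoc, mul_smul_comm, smul_smul, Finset.sum_mul]
    congr 1
    refine Finset.sum_congr rfl fun r _ => ?_
    rw [smul_mul_assoc, Finset.mul_sum, Finset.smul_sum]
    refine Finset.sum_congr rfl fun s _ => ?_
    rw [mul_smul_comm, smul_smul]
  have key : ∀ r s : ZMod d,
      (ξ ^ ((-i * r).val) * ξ ^ ((-i' * s).val)) •
          (t 𝕜 d n q a ^ r.val * t 𝕜 d n q a ^ s.val)
        = ξ ^ ((-i * r + -i' * s).val) • t 𝕜 d n q a ^ ((r + s).val) := by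
    intro r s
    rw [ya_t_valadd, ya_chi_mul 𝕜 d ξ hξd]
  rw [expand,
    Finset.sum_congr rfl (fun r (_ : r ∈ Finset.univ) =>
      Finset.sum_congr rfl (fun s (_ : s ∈ Finset.univ) => key r s))]
  have step3 : ∀ r : ZMod d,
      ∑ s : ZMod d, ξ ^ ((-i * r + -i' * s).val) • t 𝕜 d n q a ^ ((r + s).val)
        = ∑ u : ZMod d, ξ ^ ((-i * r + -i' * (u - r)).val) • t 𝕜 d n q a ^ (u.val) := by
    intro r
    refine Fintype.sum_bijective (fun s => r + s) (Equiv.addLeft r).bijective _ _ (fun s => ?_)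
    rw [add_sub_cancel_left]
  rw [Finset.sum_congr rfl (fun r (_ : r ∈ Finset.univ) => step3 r), Finset.sum_comm]
  have step4 : ∀ u : ZMod d,
      ∑ r : ZMod d, ξ ^ ((-i * r + -i' * (u - r)).val) • t 𝕜 d n q a ^ (u.val)
        = ((if i' - i = 0 then (d : 𝕜) else 0) * ξ ^ ((-i' * u).val)) •
            t 𝕜 d n q a ^ (u.val) := by
    intro u
    have hco : ∀ r : ZMod d, ξ ^ ((-i * r + -i' * (u - r)).val)
        = ξ ^ (((i' - i) * r).val) * ξ ^ ((-i' * u).val) := by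
      intro r
      have harg : -i * r + -i' * (u - r) = (i' - i) * r + -i' * u := by ring
      rw [harg, ← ya_chi_mul 𝕜 d ξ hξd]
    calc ∑ r : ZMod d, ξ ^ ((-i * r + -i' * (u - r)).val) • t 𝕜 d n q a ^ u.val
        = ∑ r : ZMod d, (ξ ^ (((i' - i) * r).val) * ξ ^ ((-i' * u).val)) •
            t 𝕜 d n q a ^ u.val :=
          Finset.sum_congr rfl (fun r _ => by rw [hco r])
      _ = ((∑ r : ZMod d, ξ ^ (((i' - i) * r).val)) * ξ ^ ((-i' * u).val)) •
            t 𝕜 d n q a ^ u.val := by rw [← Finset.sum_smul, ← Finset.sum_mul]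
      _ = _ := by rw [ya_chi_sum 𝕜 d ξ hξ (i' - i)]
  rw [Finset.sum_congr rfl (fun u (_ : u ∈ Finset.univ) => step4 u)]
  by_cases h : i = i'
  · subst h
    simp only [sub_self, if_pos rfl, if_true]
    rw [ya_Pel_eq]
    have : ∀ u : ZMod d, ((d : 𝕜) * ξ ^ ((-i * u).val)) • t 𝕜 d n q a ^ u.val
        = (d : 𝕜) • (ξ ^ ((-i * u).val) • t 𝕜 d n q a ^ u.val) := fun u => by
      rw [smul_smul]
    rw [Finset.sum_congr rfl (fun u (_ : u ∈ Finset.univ) => this u), ← Finset.smul_sum,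
      smul_smul]
    congr 1
    field_simp
  · rw [if_neg h, if_neg (fun hz => h (sub_eq_zero.mp hz).symm)]
    simp

private lemma ya_Pel_comm (a b : Fin n) (i i' : ZMod d) :
    Pel 𝕜 d n q ξ a i * Pel 𝕜 d n q ξ b i'
      = Pel 𝕜 d n q ξ b i' * Pel 𝕜 d n q ξ a i := by
  have expand : ∀ (a b : Fin n) (i i' : ZMod d),
      Pel 𝕜 d n q ξ a i * Pel 𝕜 d n q ξ b i'
        = ((d : 𝕜)⁻¹ * (d : 𝕜)⁻¹) • ∑ r : ZMod d, ∑ s : ZMod d,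
            (ξ ^ ((-i * r).val) * ξ ^ ((-i' * s).val)) •
              (t 𝕜 d n q a ^ r.val * t 𝕜 d n q b ^ s.val) := by
    intro a b i i'
    rw [ya_Pel_eq, ya_Pel_eq, smul_mul_assoc, mul_smul_comm, smul_smul, Finset.sum_mul]
    congr 1
    refine Finset.sum_congr rfl fun r _ => ?_
    rw [smul_mul_assoc, Finset.mul_sum, Finset.smul_sum]
    refine Finset.sum_congr rfl fun s _ => ?_
    rw [mul_smul_comm, smul_smul]
  rw [expand, expand, Finset.sum_comm]
  congr 1
  refine Finset.sum_congr rfl fun s _ => Finset.sum_congr rfl fun r _ => ?_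
  have hcomm : Commute (t 𝕜 d n q a) (t 𝕜 d n q b) := ya_t_comm 𝕜 d n q a b
  rw [mul_comm (ξ ^ ((-i * r).val)), (hcomm.pow_pow r.val s.val).eq]

private lemma ya_Pel_sum_one (hdk : (d : 𝕜) ≠ 0) (hξ : IsPrimitiveRoot ξ d) (a : Fin n) :
    ∑ i : ZMod d, Pel 𝕜 d n q ξ a i = 1 := by
  simp only [ya_Pel_eq]
  rw [← Finset.smul_sum, Finset.sum_comm]
  have step : ∀ r : ZMod d,
      ∑ i : ZMod d, ξ ^ ((-i * r).val) • t 𝕜 d n q a ^ r.val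
        = (if r = 0 then (d : 𝕜) else 0) • t 𝕜 d n q a ^ r.val := by
    intro r
    rw [← Finset.sum_smul]
    congr 1
    rw [← ya_chi_sum_neg 𝕜 d ξ hξ r]
    exact Finset.sum_congr rfl fun i _ => by rw [show -i * r = r * (-i) by ring]
  rw [Finset.sum_congr rfl (fun r (_ : r ∈ Finset.univ) => step r)]
  simp only [ite_smul, zero_smul]
  rw [Finset.sum_ite_eq' Finset.univ (0 : ZMod d)
    (fun r => (d : 𝕜) • t 𝕜 d n q a ^ r.val)]
  simp only [Finset.mem_univ, if_true, ZMod.val_zero, pow_zero, smul_smul]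
  rw [inv_mul_cancel₀ hdk, one_smul]

private lemma ya_eabAux_eq (hdk : (d : 𝕜) ≠ 0) (hξ : IsPrimitiveRoot ξ d) (a b : Fin n) :
    eabAux 𝕜 d n q a b = ∑ i : ZMod d, Pel 𝕜 d n q ξ a i * Pel 𝕜 d n q ξ b i := by
  have hξd : ξ ^ d = 1 := hξ.pow_eq_one
  have expand : ∀ i : ZMod d,
      Pel 𝕜 d n q ξ a i * Pel 𝕜 d n q ξ b i
        = ((d : 𝕜)⁻¹ * (d : 𝕜)⁻¹) • ∑ r : ZMod d, ∑ s : ZMod d,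
            (ξ ^ ((-i * r).val) * ξ ^ ((-i * s).val)) •
              (t 𝕜 d n q a ^ r.val * t 𝕜 d n q b ^ s.val) := by
    intro i
    rw [ya_Pel_eq, ya_Pel_eq, smul_mul_assoc, mul_smul_comm, smul_smul, Finset.sum_mul]
    congr 1
    refine Finset.sum_congr rfl fun r _ => ?_
    rw [smul_mul_assoc, Finset.mul_sum, Finset.smul_sum]
    refine Finset.sum_congr rfl fun s _ => ?_
    rw [mul_smul_comm, smul_smul]
  rw [Finset.sum_congr rfl (fun i (_ : i ∈ Finset.univ) => expand i), ← Finset.smul_sum,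
    Finset.sum_comm]
  rw [Finset.sum_congr rfl (fun r (_ : r ∈ Finset.univ) => Finset.sum_comm)]
  have inner : ∀ r s : ZMod d,
      ∑ i : ZMod d, (ξ ^ ((-i * r).val) * ξ ^ ((-i * s).val)) •
          (t 𝕜 d n q a ^ r.val * t 𝕜 d n q b ^ s.val)
        = (if r + s = 0 then (d : 𝕜) else 0) •
            (t 𝕜 d n q a ^ r.val * t 𝕜 d n q b ^ s.val) := by
    intro r s
    rw [← Finset.sum_smul]
    congr 1
    rw [← ya_chi_sum_neg 𝕜 d ξ hξ (r + s)]
    refine Finset.sum_congr rfl fun i _ => ?_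
    rw [ya_chi_mul 𝕜 d ξ hξd, show -i * r + -i * s = (r + s) * (-i) by ring]
  rw [Finset.sum_congr rfl (fun r (_ : r ∈ Finset.univ) =>
    Finset.sum_congr rfl (fun s (_ : s ∈ Finset.univ) => inner r s))]
  have inner2 : ∀ r : ZMod d,
      ∑ s : ZMod d, (if r + s = 0 then (d : 𝕜) else 0) •
          (t 𝕜 d n q a ^ r.val * t 𝕜 d n q b ^ s.val)
        = (d : 𝕜) • (t 𝕜 d n q a ^ r.val * t 𝕜 d n q b ^ ((-r : ZMod d).val)) := by
    intro r
    have hcond : ∀ s : ZMod d, (r + s = 0) = (s = -r) := by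
      intro s
      apply propext
      constructor
      · intro h; exact eq_neg_of_add_eq_zero_right h
      · intro h; rw [h, add_neg_cancel]
    simp only [hcond, ite_smul, zero_smul]
    rw [Finset.sum_ite_eq' Finset.univ (-r)
      (fun s => (d : 𝕜) • (t 𝕜 d n q a ^ r.val * t 𝕜 d n q b ^ s.val))]
    simp
  rw [Finset.sum_congr rfl (fun r (_ : r ∈ Finset.univ) => inner2 r), ← Finset.smul_sum,
    smul_smul]
  have hconst : (d : 𝕜)⁻¹ * (d : 𝕜)⁻¹ * (d : 𝕜) = (d : 𝕜)⁻¹ := by field_simp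
  rw [hconst, eabAux]
  congr 1
  rw [← ya_sum_range_zmod
    (f := fun r : ZMod d => t 𝕜 d n q a ^ r.val * t 𝕜 d n q b ^ ((-r).val))]
  refine Finset.sum_congr rfl fun k hk => ?_
  have hk' := Finset.mem_range.mp hk
  rw [ZMod.val_natCast_of_lt hk', ZMod.neg_val', ZMod.val_natCast_of_lt hk']

private lemma ya_eab_eq (hdk : (d : 𝕜) ≠ 0) (hξ : IsPrimitiveRoot ξ d) (a b : Fin n) :
    eab 𝕜 d n q a b = ∑ i : ZMod d, Pel 𝕜 d n q ξ a i * Pel 𝕜 d n q ξ b i := by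
  rw [eab]
  split_ifs with h
  · exact ya_eabAux_eq 𝕜 d n q ξ hdk hξ a b
  · rw [ya_eabAux_eq 𝕜 d n q ξ hdk hξ b a]
    exact Finset.sum_congr rfl fun i _ => ya_Pel_comm 𝕜 d n q ξ b a i i

private lemma ya_Pel_mul_prod (hdk : (d : 𝕜) ≠ 0) (hξ : IsPrimitiveRoot ξ d)
    (i : ZMod d) (j : Fin n → ZMod d) (a : Fin n) (L : List (Fin n)) :
    L.Nodup → a ∈ L →
      Pel 𝕜 d n q ξ a i * (L.map (fun c => Pel 𝕜 d n q ξ c (j c))).prod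
        = if i = j a then (L.map (fun c => Pel 𝕜 d n q ξ c (j c))).prod else 0 := by
  induction L with
  | nil => intro _ h; exact absurd h List.not_mem_nil
  | cons b L ih =>
    intro hnd hmem
    rw [List.map_cons, List.prod_cons]
    by_cases hab : a = b
    · subst hab
      rw [← mul_assoc, ya_Pel_mul_Pel 𝕜 d n q ξ hdk hξ a i (j a)]
      split_ifs with h
      · rw [h]
      · rw [zero_mul]
    · have hmem' : a ∈ L := by
        rcases List.mem_cons.mp hmem with h | h
        · exact absurd h hab
        · exact h
      have hnd' : L.Nodup := (List.nodup_cons.mp hnd).2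
      rw [← mul_assoc, ya_Pel_comm 𝕜 d n q ξ a b i (j b), mul_assoc, ih hnd' hmem']
      split_ifs with h
      · rfl
      · rw [mul_zero]

private lemma ya_Pel_mul_ej (hdk : (d : 𝕜) ≠ 0) (hξ : IsPrimitiveRoot ξ d)
    (i : ZMod d) (j : Fin n → ZMod d) (a : Fin n) :
    Pel 𝕜 d n q ξ a i * ej 𝕜 d n q ξ j
      = if i = j a then ej 𝕜 d n q ξ j else 0 := by
  rw [ya_ej_eq]
  exact ya_Pel_mul_prod 𝕜 d n q ξ hdk hξ i j a (List.finRange n)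
    (List.nodup_finRange n) (List.mem_finRange a)

private lemma ya_eab_mul_ej (hdk : (d : 𝕜) ≠ 0) (hξ : IsPrimitiveRoot ξ d)
    (a b : Fin n) (j : Fin n → ZMod d) :
    eab 𝕜 d n q a b * ej 𝕜 d n q ξ j
      = if j a = j b then ej 𝕜 d n q ξ j else 0 := by
  rw [ya_eab_eq 𝕜 d n q ξ hdk hξ a b, Finset.sum_mul]
  have step : ∀ i : ZMod d,
      (Pel 𝕜 d n q ξ a i * Pel 𝕜 d n q ξ b i) * ej 𝕜 d n q ξ j
        = if i = j b then Pel 𝕜 d n q ξ a i * ej 𝕜 d n q ξ j else 0 := by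
    intro i
    rw [mul_assoc, ya_Pel_mul_ej 𝕜 d n q ξ hdk hξ i j b]
    split_ifs with h
    · rfl
    · rw [mul_zero]
  rw [Finset.sum_congr rfl (fun i (_ : i ∈ Finset.univ) => step i)]
  rw [Finset.sum_ite_eq' Finset.univ (j b)
    (fun i => Pel 𝕜 d n q ξ a i * ej 𝕜 d n q ξ j)]
  simp only [Finset.mem_univ, if_true]
  rw [ya_Pel_mul_ej 𝕜 d n q ξ hdk hξ (j b) j a]
  exact if_congr eq_comm rfl rfl

private lemma ya_prod_pairs (hdk : (d : 𝕜) ≠ 0) (hξ : IsPrimitiveRoot ξ d)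
    (A : Setoid (Fin n)) (j : Fin n → ZMod d) (Lp : List (Fin n × Fin n)) :
    ((Lp.map (fun p => if A.r p.1 p.2 ∧ p.1 ≠ p.2 then eab 𝕜 d n q p.1 p.2 else 1)).prod)
        * ej 𝕜 d n q ξ j
      = if (∀ p ∈ Lp, (A.r p.1 p.2 ∧ p.1 ≠ p.2) → j p.1 = j p.2)
          then ej 𝕜 d n q ξ j else 0 := by
  induction Lp with
  | nil => simp
  | cons p Lp ih =>
    rw [List.map_cons, List.prod_cons, mul_assoc, ih]
    by_cases hc : A.r p.1 p.2 ∧ p.1 ≠ p.2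
    · by_cases h2 : ∀ p' ∈ Lp, (A.r p'.1 p'.2 ∧ p'.1 ≠ p'.2) → j p'.1 = j p'.2
      · rw [if_pos h2, if_pos hc, ya_eab_mul_ej 𝕜 d n q ξ hdk hξ p.1 p.2 j]
        refine if_congr ⟨fun hj p' hp' hc' => ?_,
          fun h => h p (List.mem_cons_self) hc⟩ rfl rfl
        rcases List.mem_cons.mp hp' with h' | h'
        · subst h'; exact hj
        · exact h2 p' h' hc'
      · rw [if_neg h2, mul_zero,
          if_neg (fun hall => h2 (fun p' hp' => hall p' (List.mem_cons_of_mem _ hp')))]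
    · rw [if_neg hc, one_mul]
      refine if_congr ⟨fun h p' hp' hc' => ?_,
        fun h p' hp' => h p' (List.mem_cons_of_mem _ hp')⟩ rfl rfl
      rcases List.mem_cons.mp hp' with h' | h'
      · subst h'; exact absurd hc' hc
      · exact h p' h' hc'


private lemma ya_sum_filter_one (hdk : (d : 𝕜) ≠ 0) (hξ : IsPrimitiveRoot ξ d)
    (L : List (Fin n)) :
    L.Nodup → ∀ j₀ : Fin n → ZMod d,
      ∑ j ∈ Finset.univ.filter (fun j : Fin n → ZMod d => ∀ a, a ∉ L → j a = j₀ a),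
        ((L.map (fun a => Pel 𝕜 d n q ξ a (j a))).prod) = 1 := by
  induction L with
  | nil =>
    intro _ j₀
    have hset : Finset.univ.filter (fun j : Fin n → ZMod d => ∀ a, a ∉ ([] : List (Fin n)) → j a = j₀ a)
        = {j₀} := by
      ext j
      simp [funext_iff, List.not_mem_nil]
    rw [hset, Finset.sum_singleton]
    simp
  | cons b L ih =>
    intro hnd j₀
    have hb : b ∉ L := (List.nodup_cons.mp hnd).1
    have hnd' : L.Nodup := (List.nodup_cons.mp hnd).2
    rw [← Finset.sum_fiberwise_of_maps_to (g := fun j : Fin n → ZMod d => j b)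
      (fun j _ => Finset.mem_univ (j b))]
    have hset : ∀ i : ZMod d,
        (Finset.univ.filter
            (fun j : Fin n → ZMod d => ∀ a, a ∉ b :: L → j a = j₀ a)).filter
          (fun j => j b = i)
        = Finset.univ.filter
            (fun j : Fin n → ZMod d => ∀ a, a ∉ L → j a = Function.update j₀ b i a) := by
      intro i
      ext j
      simp only [Finset.mem_filter, Finset.mem_univ, true_and]
      constructor
      · rintro ⟨h1, h2⟩ a ha
        by_cases hab : a = b
        · subst hab; rw [h2, Function.update_self]
        · rw [Function.update_of_ne hab]
          exact h1 a (by simp [List.mem_cons, hab, ha])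
      · intro h
        constructor
        · intro a ha
          have ha' : a ∉ L := fun hm => ha (List.mem_cons_of_mem _ hm)
          have hab : a ≠ b := fun he => ha (he ▸ List.mem_cons_self)
          rw [h a ha', Function.update_of_ne hab]
        · rw [h b hb, Function.update_self]
    have hinner : ∀ i : ZMod d,
        ∑ j ∈ (Finset.univ.filter
            (fun j : Fin n → ZMod d => ∀ a, a ∉ b :: L → j a = j₀ a)).filter
          (fun j => j b = i),
          (((b :: L).map (fun a => Pel 𝕜 d n q ξ a (j a))).prod)
        = Pel 𝕜 d n q ξ b i := by
      intro i
      rw [hset i]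
      have hterm : ∀ j ∈ Finset.univ.filter
          (fun j : Fin n → ZMod d => ∀ a, a ∉ L → j a = Function.update j₀ b i a),
          (((b :: L).map (fun a => Pel 𝕜 d n q ξ a (j a))).prod)
            = Pel 𝕜 d n q ξ b i * ((L.map (fun a => Pel 𝕜 d n q ξ a (j a))).prod) := by
        intro j hj
        have hjb : j b = i := by
          have := (Finset.mem_filter.mp hj).2 b hb
          rwa [Function.update_self] at this
        rw [List.map_cons, List.prod_cons, hjb]
      rw [Finset.sum_congr rfl hterm, ← Finset.mul_sum, ih hnd' (Function.update j₀ b i),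
        mul_one]
    rw [Finset.sum_congr rfl (fun i (_ : i ∈ Finset.univ) => hinner i)]
    exact ya_Pel_sum_one 𝕜 d n q ξ hdk hξ b

private lemma ya_sum_ej (hdk : (d : 𝕜) ≠ 0) (hξ : IsPrimitiveRoot ξ d) :
    ∑ j : Fin n → ZMod d, ej 𝕜 d n q ξ j = 1 := by
  have h := ya_sum_filter_one 𝕜 d n q ξ hdk hξ (List.finRange n) (List.nodup_finRange n)
    (fun _ => 0)
  have hset : Finset.univ.filter
      (fun j : Fin n → ZMod d => ∀ a, a ∉ List.finRange n → j a = 0) = Finset.univ := by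
    ext j
    simp [List.mem_finRange]
  rw [hset] at h
  rw [← h]
  exact Finset.sum_congr rfl fun j _ => ya_ej_eq 𝕜 d n q ξ j


end Aux

end YH

open YH in
/-- if `𝕜` contains a primitive `d`-th root of unity `ξ`, then in `Y_{d,n}(q)`,
for every set partition `A`, `e(A) = Σ e(j)`, the sum over all `j ∈ (ℤ/dℤ)^n` such that
`a ∼_A b` implies `j_a = j_b`. -/
theorem statement2 (𝕜 : Type) [Field 𝕜] (d n : ℕ) [NeZero d] (hn : 0 < n)
    (hdk : (d : 𝕜) ≠ 0) (q : 𝕜) (hq0 : q ≠ 0) (hq1 : q ≠ 1)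
    (ξ : 𝕜) (hξ : IsPrimitiveRoot ξ d) :
    ∀ A : Setoid (Fin n),
      eSet 𝕜 d n q A
        = ∑ j ∈ Finset.univ.filter
            (fun j : Fin n → ZMod d => ∀ a b : Fin n, A.r a b → j a = j b),
            ej 𝕜 d n q ξ j := by
  intro A
  rw [Finset.sum_filter]
  have hiff : ∀ j : Fin n → ZMod d,
      (∀ p ∈ (List.finRange n ×ˢ List.finRange n),
          (A.r p.1 p.2 ∧ p.1 ≠ p.2) → j p.1 = j p.2)
        ↔ (∀ a b : Fin n, A.r a b → j a = j b) := by
    intro j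
    constructor
    · intro h a b hr
      by_cases hab : a = b
      · rw [hab]
      · exact h (a, b) (by simp [List.pair_mem_product, List.mem_finRange]) ⟨hr, hab⟩
    · intro h p _ hc
      exact h p.1 p.2 hc.1
  calc eSet 𝕜 d n q A = eSet 𝕜 d n q A * 1 := (mul_one _).symm
    _ = eSet 𝕜 d n q A * ∑ j : Fin n → ZMod d, ej 𝕜 d n q ξ j := by
        rw [YH.ya_sum_ej 𝕜 d n q ξ hdk hξ]
    _ = ∑ j : Fin n → ZMod d, eSet 𝕜 d n q A * ej 𝕜 d n q ξ j := Finset.mul_sum _ _ _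
    _ = ∑ j : Fin n → ZMod d,
          if (∀ a b : Fin n, A.r a b → j a = j b) then ej 𝕜 d n q ξ j else 0 := by
        refine Finset.sum_congr rfl fun j _ => ?_
        rw [eSet, YH.ya_prod_pairs 𝕜 d n q ξ hdk hξ A j]
        exact if_congr (hiff j) rfl rfl

end
end

section
/- Assume 𝕜 contains a primitive d-th root of unity ξ. Then in Y_{d,n}(q), for every A ∈ SetPar_n one has e(A) = Σ_{B ∈ SetPar_n, A ⊆ B} ē(B), where A ⊆ B means that every block of B is a union of blocks of A. -/
open scoped Classical

noncomputable section

set_option linter.unusedSectionVars false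

namespace YHaux

variable {𝕜 : Type} [Field 𝕜]

def chi (d : ℕ) (ξ : 𝕜) (c : ZMod d) : 𝕜 := ξ ^ c.val

variable {d : ℕ} [NeZero d] {ξ : 𝕜}

lemma pow_val_mod (hξ1 : ξ ^ d = 1) (m : ℕ) : ξ ^ (m % d) = ξ ^ m := by
  conv_rhs => rw [← Nat.mod_add_div m d]
  rw [pow_add, pow_mul, hξ1, one_pow, mul_one]

lemma chi_zero : chi d ξ 0 = 1 := by simp [chi]

lemma chi_add (hξ1 : ξ ^ d = 1) (x y : ZMod d) :
    chi d ξ (x + y) = chi d ξ x * chi d ξ y := by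
  unfold chi
  rw [ZMod.val_add, pow_val_mod hξ1, pow_add]

lemma chi_mul_nat (hξ1 : ξ ^ d = 1) (c : ZMod d) (k : ℕ) :
    chi d ξ (c * (k : ZMod d)) = chi d ξ c ^ k := by
  unfold chi
  have h : c * (k : ZMod d) = ((c.val * k : ℕ) : ZMod d) := by
    push_cast
    rw [ZMod.natCast_val, ZMod.cast_id]
  rw [h, ZMod.val_natCast, pow_val_mod hξ1, pow_mul]

lemma sum_zmod {M : Type*} [AddCommMonoid M] (F : ZMod d → M) :
    ∑ c : ZMod d, F c = ∑ r ∈ Finset.range d, F (r : ZMod d) := by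
  refine Finset.sum_nbij' (fun c => c.val) (fun r => (r : ZMod d)) ?_ ?_ ?_ ?_ ?_
  · intro c _; exact Finset.mem_range.mpr c.val_lt
  · intro r _; exact Finset.mem_univ _
  · intro c _; simp [ZMod.natCast_val, ZMod.cast_id]
  · intro r hr; exact ZMod.val_natCast_of_lt (Finset.mem_range.mp hr)
  · intro c _; simp [ZMod.natCast_val, ZMod.cast_id]

lemma gauss (hξ : IsPrimitiveRoot ξ d) (e : ZMod d) :
    ∑ c : ZMod d, chi d ξ (c * e) = if e = 0 then (d : 𝕜) else 0 := by
  have hξ1 : ξ ^ d = 1 := hξ.pow_eq_one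
  rw [sum_zmod]
  have h1 : ∀ r : ℕ, chi d ξ ((r : ZMod d) * e) = (ξ ^ e.val) ^ r := by
    intro r
    rw [mul_comm, chi_mul_nat hξ1, chi, ← pow_mul, mul_comm e.val r, pow_mul]
  simp_rw [h1]
  by_cases he : e = 0
  · subst he
    simp [Finset.sum_const]
  · have hvpos : 0 < e.val := by
      rcases Nat.eq_zero_or_pos e.val with h | h
      · exact absurd ((ZMod.val_eq_zero e).mp h) he
      · exact h
    have hζ : ξ ^ e.val ≠ 1 := hξ.pow_ne_one_of_pos_of_lt hvpos.ne' e.val_lt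
    rw [geom_sum_eq hζ d]
    have hd1 : (ξ ^ e.val) ^ d = 1 := by
      rw [← pow_mul, mul_comm, pow_mul, hξ1, one_pow]
    simp [hd1, he]

end YHaux
-- part2: Y side basics
namespace YHaux
open YH

variable (𝕜 : Type) [Field 𝕜] (d n : ℕ) [NeZero d] (q ξ : 𝕜)

lemma t_comm (a b : Fin n) :
    t 𝕜 d n q a * t 𝕜 d n q b = t 𝕜 d n q b * t 𝕜 d n q a := by
  have h := RingQuot.mkAlgHom_rel 𝕜 (Rel.tcomm (𝕜 := 𝕜) (d := d) (n := n) (q := q) a b)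
  simpa [t, π, map_mul] using h

lemma t_pow_d (a : Fin n) : t 𝕜 d n q a ^ d = 1 := by
  have h := RingQuot.mkAlgHom_rel 𝕜 (Rel.torder (𝕜 := 𝕜) (d := d) (n := n) (q := q) a)
  simpa [t, π, map_pow] using h

lemma t_pow_mod (a : Fin n) (m : ℕ) :
    t 𝕜 d n q a ^ (m % d) = t 𝕜 d n q a ^ m := by
  conv_rhs => rw [← Nat.mod_add_div m d]
  rw [pow_add, pow_mul, t_pow_d, one_pow, mul_one]

/-- The idempotent `(1/d) ∑_r ξ^{-cr} t_a^r`. -/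
def Pc (a : Fin n) (c : ZMod d) : Y 𝕜 d n q :=
  (d : 𝕜)⁻¹ • ∑ r ∈ Finset.range d, chi d ξ (-c * (r : ZMod d)) • t 𝕜 d n q a ^ r

lemma ej_eq (j : Fin n → ZMod d) :
    ej 𝕜 d n q ξ j = ((List.finRange n).map (fun a => Pc 𝕜 d n q ξ a (j a))).prod := rfl

lemma commute_t_pc (a b : Fin n) (c : ZMod d) :
    Commute (t 𝕜 d n q a) (Pc 𝕜 d n q ξ b c) := by
  unfold Pc
  refine Commute.smul_right ?_ _
  refine Commute.sum_right _ _ _ ?_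
  intro r _
  exact Commute.smul_right ((Commute.pow_right (t_comm 𝕜 d n q a b) r)) _

lemma sum_range_tpow (F : ZMod d → 𝕜) (a : Fin n) :
    ∑ r ∈ Finset.range d, F (r : ZMod d) • t 𝕜 d n q a ^ r
      = ∑ s : ZMod d, F s • t 𝕜 d n q a ^ s.val := by
  rw [sum_zmod]
  refine Finset.sum_congr rfl ?_
  intro r hr
  rw [ZMod.val_natCast_of_lt (Finset.mem_range.mp hr)]

lemma t_mul_pc (hξ1 : ξ ^ d = 1) (a : Fin n) (c : ZMod d) :
    t 𝕜 d n q a * Pc 𝕜 d n q ξ a c = chi d ξ c • Pc 𝕜 d n q ξ a c := by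
  unfold Pc
  rw [mul_smul_comm, smul_comm (chi d ξ c) ((d:𝕜)⁻¹)]
  congr 1
  rw [Finset.mul_sum, Finset.smul_sum]
  have lhs : ∑ r ∈ Finset.range d,
      t 𝕜 d n q a * (chi d ξ (-c * (r : ZMod d)) • t 𝕜 d n q a ^ r)
      = ∑ s : ZMod d, chi d ξ (-c * s) • t 𝕜 d n q a ^ (s + 1).val := by
    rw [sum_zmod]
    refine Finset.sum_congr rfl ?_
    intro r hr
    have h1 : ((r : ZMod d) + 1).val = (r + 1) % d := by
      have : ((r : ZMod d) + 1) = ((r + 1 : ℕ) : ZMod d) := by push_cast; ring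
      rw [this, ZMod.val_natCast]
    rw [h1, t_pow_mod, mul_smul_comm, ← pow_succ']
  rw [lhs]
  have rhs : ∑ r ∈ Finset.range d,
      chi d ξ c • (chi d ξ (-c * (r : ZMod d)) • t 𝕜 d n q a ^ r)
      = ∑ s : ZMod d, (chi d ξ c * chi d ξ (-c * s)) • t 𝕜 d n q a ^ s.val := by
    rw [sum_zmod]
    refine Finset.sum_congr rfl ?_
    intro r hr
    rw [ZMod.val_natCast_of_lt (Finset.mem_range.mp hr), smul_smul]
  rw [rhs]
  refine Fintype.sum_equiv (Equiv.addRight (1 : ZMod d)) _ _ ?_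
  intro s
  have harg : chi d ξ c * chi d ξ (-c * (s + 1)) = chi d ξ (-c * s) := by
    rw [← chi_add hξ1]
    congr 1
    ring
  simp only [Equiv.coe_addRight, harg]

lemma tpow_absorb (hξ1 : ξ ^ d = 1) (a : Fin n) (c : ZMod d) {x : Y 𝕜 d n q}
    (h : t 𝕜 d n q a * x = chi d ξ c • x) (k : ℕ) :
    t 𝕜 d n q a ^ k * x = chi d ξ (c * (k : ZMod d)) • x := by
  induction k with
  | zero => simp [chi_zero]
  | succ k ih =>
    rw [pow_succ, mul_assoc, h, mul_smul_comm, ih, smul_smul, ← chi_add hξ1]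
    congr 2
    push_cast
    ring

lemma sum_pc (hξ : IsPrimitiveRoot ξ d) (hdk : (d : 𝕜) ≠ 0) (a : Fin n) :
    ∑ c : ZMod d, Pc 𝕜 d n q ξ a c = 1 := by
  unfold Pc
  rw [← Finset.smul_sum, Finset.sum_comm]
  have h1 : ∀ r ∈ Finset.range d,
      ∑ c : ZMod d, chi d ξ (-c * (r : ZMod d)) • t 𝕜 d n q a ^ r
      = (if ((r : ZMod d)) = 0 then (d : 𝕜) else 0) • t 𝕜 d n q a ^ r := by
    intro r _
    rw [← Finset.sum_smul]
    congr 1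
    have h2 : ∀ c : ZMod d, -c * (r : ZMod d) = c * (-(r : ZMod d)) := by intro c; ring
    simp_rw [h2]
    rw [gauss hξ (-(r : ZMod d))]
    simp [neg_eq_zero]
  rw [Finset.sum_congr rfl h1]
  rw [Finset.sum_eq_single 0]
  · simp [smul_smul, inv_mul_cancel₀ hdk]
  · intro r hr hr0
    have : ((r : ZMod d)) ≠ 0 := by
      intro hc
      have := ZMod.val_natCast_of_lt (Finset.mem_range.mp hr)
      rw [hc, ZMod.val_zero] at this
      exact hr0 this.symm
    simp [this]
  · intro h0
    exact absurd (Finset.mem_range.mpr (Nat.pos_of_ne_zero (NeZero.ne d))) h0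

end YHaux

-- part3
namespace YHaux
open YH

variable (𝕜 : Type) [Field 𝕜] (d n : ℕ) [NeZero d] (q ξ : 𝕜)

lemma t_mul_listprod (hξ1 : ξ ^ d = 1) (j : Fin n → ZMod d) (a : Fin n) :
    ∀ L : List (Fin n), a ∈ L →
      t 𝕜 d n q a * (L.map (fun b => Pc 𝕜 d n q ξ b (j b))).prod
        = chi d ξ (j a) • (L.map (fun b => Pc 𝕜 d n q ξ b (j b))).prod := by
  intro L
  induction L with
  | nil => intro h; simp at h
  | cons b L ih =>
    intro hmem
    rw [List.map_cons, List.prod_cons, ← mul_assoc]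
    by_cases hab : b = a
    · subst hab
      rw [t_mul_pc 𝕜 d n q ξ hξ1, smul_mul_assoc]
    · have haL : a ∈ L := by
        rcases List.mem_cons.mp hmem with h | h
        · exact absurd h.symm hab
        · exact h
      rw [(commute_t_pc 𝕜 d n q ξ a b (j b)).eq, mul_assoc, ih haL, mul_smul_comm]

lemma t_mul_ej (hξ1 : ξ ^ d = 1) (j : Fin n → ZMod d) (a : Fin n) :
    t 𝕜 d n q a * ej 𝕜 d n q ξ j = chi d ξ (j a) • ej 𝕜 d n q ξ j := by
  rw [ej_eq]
  exact t_mul_listprod 𝕜 d n q ξ hξ1 j a _ (List.mem_finRange a)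

lemma tpow_mul_ej (hξ1 : ξ ^ d = 1) (j : Fin n → ZMod d) (a : Fin n) (k : ℕ) :
    t 𝕜 d n q a ^ k * ej 𝕜 d n q ξ j
      = chi d ξ (j a * (k : ZMod d)) • ej 𝕜 d n q ξ j :=
  tpow_absorb 𝕜 d n q ξ hξ1 a (j a) (t_mul_ej 𝕜 d n q ξ hξ1 j a) k

lemma eabAux_mul_ej (hξ : IsPrimitiveRoot ξ d) (hdk : (d : 𝕜) ≠ 0)
    (a b : Fin n) (j : Fin n → ZMod d) :
    eabAux 𝕜 d n q a b * ej 𝕜 d n q ξ j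
      = if j a = j b then ej 𝕜 d n q ξ j else 0 := by
  have hξ1 : ξ ^ d = 1 := hξ.pow_eq_one
  unfold eabAux
  rw [smul_mul_assoc, Finset.sum_mul]
  have h1 : ∀ r ∈ Finset.range d,
      t 𝕜 d n q a ^ r * t 𝕜 d n q b ^ ((d - r) % d) * ej 𝕜 d n q ξ j
        = chi d ξ ((j a - j b) * (r : ZMod d)) • ej 𝕜 d n q ξ j := by
    intro r hr
    have hrd : r < d := Finset.mem_range.mp hr
    have hcast : (((d - r) % d : ℕ) : ZMod d) = -(r : ZMod d) := by
      rw [ZMod.natCast_mod, Nat.cast_sub hrd.le, ZMod.natCast_self, zero_sub]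
    rw [mul_assoc, tpow_mul_ej 𝕜 d n q ξ hξ1, hcast, mul_smul_comm,
      tpow_mul_ej 𝕜 d n q ξ hξ1, smul_smul, ← chi_add hξ1]
    congr 2
    ring
  rw [Finset.sum_congr rfl h1, ← Finset.sum_smul]
  have h2 : ∑ r ∈ Finset.range d, chi d ξ ((j a - j b) * (r : ZMod d))
      = if j a - j b = 0 then (d : 𝕜) else 0 := by
    have hz := sum_zmod (M := 𝕜) (fun c => chi d ξ ((j a - j b) * c))
    rw [← hz]
    have h3 : ∀ c : ZMod d, (j a - j b) * c = c * (j a - j b) := fun c => mul_comm _ _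
    simp_rw [h3]
    exact gauss hξ _
  rw [h2]
  by_cases hj : j a = j b
  · rw [if_pos (sub_eq_zero.mpr hj), if_pos hj, smul_smul, inv_mul_cancel₀ hdk, one_smul]
  · rw [if_neg (fun hc => hj (sub_eq_zero.mp hc)), if_neg hj, zero_smul, smul_zero]

lemma eab_mul_ej (hξ : IsPrimitiveRoot ξ d) (hdk : (d : 𝕜) ≠ 0)
    (a b : Fin n) (j : Fin n → ZMod d) :
    eab 𝕜 d n q a b * ej 𝕜 d n q ξ j
      = if j a = j b then ej 𝕜 d n q ξ j else 0 := by
  unfold eab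
  by_cases h : (a : ℕ) ≤ (b : ℕ)
  · rw [if_pos h, eabAux_mul_ej 𝕜 d n q ξ hξ hdk]
  · rw [if_neg h, eabAux_mul_ej 𝕜 d n q ξ hξ hdk]
    by_cases hj : j a = j b
    · rw [if_pos hj.symm, if_pos hj]
    · rw [if_neg (fun hc => hj hc.symm), if_neg hj]

end YHaux

-- part4
namespace YHaux
open YH

variable (𝕜 : Type) [Field 𝕜] (d n : ℕ) [NeZero d] (q ξ : 𝕜)

lemma sum_ej_one (hξ : IsPrimitiveRoot ξ d) (hdk : (d : 𝕜) ≠ 0) :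
    ∑ j : Fin n → ZMod d, ej 𝕜 d n q ξ j = 1 := by
  set S := Algebra.adjoin 𝕜 (Set.range (t 𝕜 d n q)) with hS
  letI : CommRing S := Algebra.adjoinCommRingOfComm 𝕜 (by
    rintro x ⟨a, rfl⟩ y ⟨b, rfl⟩
    exact t_comm 𝕜 d n q a b)
  have hmem : ∀ (a : Fin n) (c : ZMod d), Pc 𝕜 d n q ξ a c ∈ S := by
    intro a c
    refine Subalgebra.smul_mem _ (Subalgebra.sum_mem _ ?_) _
    intro r _
    exact Subalgebra.smul_mem _ (Subalgebra.pow_mem _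
      (Algebra.subset_adjoin (Set.mem_range_self a)) r) _
  set f : Fin n → ZMod d → S := fun a c => ⟨Pc 𝕜 d n q ξ a c, hmem a c⟩ with hf
  have hval : ∀ j : Fin n → ZMod d, ej 𝕜 d n q ξ j = S.val (∏ a, f a (j a)) := by
    intro j
    rw [Fin.prod_univ_def, map_list_prod, List.map_map, ej_eq]
    rfl
  simp_rw [hval]
  rw [← map_sum, ← Fintype.prod_sum (f := f)]
  have hone : ∀ a : Fin n, ∑ c : ZMod d, f a c = 1 := by
    intro a
    apply Subtype.ext
    push_cast [hf]
    exact sum_pc 𝕜 d n q ξ hξ hdk a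
  rw [Finset.prod_congr rfl (fun a _ => hone a)]
  simp

end YHaux

-- part5
namespace YHaux
open YH

variable (𝕜 : Type) [Field 𝕜] (d n : ℕ) [NeZero d] (q ξ : 𝕜)

lemma eSetList_mul_ej (hξ : IsPrimitiveRoot ξ d) (hdk : (d : 𝕜) ≠ 0)
    (A : Setoid (Fin n)) (j : Fin n → ZMod d) :
    ∀ L : List (Fin n × Fin n),
      (L.map (fun p => if A.r p.1 p.2 ∧ p.1 ≠ p.2 then eab 𝕜 d n q p.1 p.2 else 1)).prod
          * ej 𝕜 d n q ξ j
        = if (∀ p ∈ L, A.r p.1 p.2 → j p.1 = j p.2) then ej 𝕜 d n q ξ j else 0 := by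
  intro L
  induction L with
  | nil => simp
  | cons p L ih =>
    rw [List.map_cons, List.prod_cons, mul_assoc, ih]
    by_cases hL : ∀ p' ∈ L, A.r p'.1 p'.2 → j p'.1 = j p'.2
    · rw [if_pos hL]
      by_cases hp : A.r p.1 p.2 ∧ p.1 ≠ p.2
      · rw [if_pos hp, eab_mul_ej 𝕜 d n q ξ hξ hdk]
        by_cases hj : j p.1 = j p.2
        · rw [if_pos hj, if_pos]
          intro p' hp'
          rcases List.mem_cons.mp hp' with h | h
          · subst h; exact fun _ => hj
          · exact hL p' h
        · rw [if_neg hj, if_neg]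
          intro hall
          exact hj (hall p List.mem_cons_self hp.1)
      · rw [if_neg hp, one_mul, if_pos]
        intro p' hp'
        rcases List.mem_cons.mp hp' with h | h
        · subst h
          intro hr
          rcases not_and_or.mp hp with h1 | h2
          · exact absurd hr h1
          · rw [not_ne_iff.mp h2]
        · exact hL p' h
    · rw [if_neg hL, mul_zero, if_neg]
      intro hall
      exact hL (fun p' hp' => hall p' (List.mem_cons_of_mem p hp'))

lemma eSet_mul_ej (hξ : IsPrimitiveRoot ξ d) (hdk : (d : 𝕜) ≠ 0)
    (A : Setoid (Fin n)) (j : Fin n → ZMod d) :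
    eSet 𝕜 d n q A * ej 𝕜 d n q ξ j
      = if (∀ a b : Fin n, A.r a b → j a = j b) then ej 𝕜 d n q ξ j else 0 := by
  unfold eSet
  rw [eSetList_mul_ej 𝕜 d n q ξ hξ hdk]
  congr 1
  apply propext
  constructor
  · intro h a b hab
    exact h (a, b) (List.mem_product.mpr ⟨List.mem_finRange a, List.mem_finRange b⟩) hab
  · intro h p _ hp
    exact h p.1 p.2 hp

/-- The kernel set partition of `j`. -/
def kerS (j : Fin n → ZMod d) : Setoid (Fin n) :=
  ⟨fun a b => j a = j b, ⟨fun _ => rfl, Eq.symm, Eq.trans⟩⟩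

end YHaux

open YH YHaux in
theorem statement4' (𝕜 : Type) [Field 𝕜] (d n : ℕ) [NeZero d] (hn : 0 < n)
    (hdk : (d : 𝕜) ≠ 0) (q : 𝕜) (hq0 : q ≠ 0) (hq1 : q ≠ 1)
    (ξ : 𝕜) (hξ : IsPrimitiveRoot ξ d) :
    ∀ A : Setoid (Fin n),
      eSet 𝕜 d n q A
        = ∑ B ∈ Finset.univ.filter (fun B : Setoid (Fin n) => A ≤ B),
            ebar 𝕜 d n q ξ B := by
  intro A
  have hLHS : eSet 𝕜 d n q A
      = ∑ j ∈ Finset.univ.filter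
          (fun j : Fin n → ZMod d => ∀ a b : Fin n, A.r a b → j a = j b),
          ej 𝕜 d n q ξ j := by
    calc eSet 𝕜 d n q A = eSet 𝕜 d n q A * 1 := (mul_one _).symm
      _ = eSet 𝕜 d n q A * ∑ j : Fin n → ZMod d, ej 𝕜 d n q ξ j := by
          rw [sum_ej_one 𝕜 d n q ξ hξ hdk]
      _ = ∑ j : Fin n → ZMod d, eSet 𝕜 d n q A * ej 𝕜 d n q ξ j := Finset.mul_sum _ _ _
      _ = ∑ j : Fin n → ZMod d,
            if (∀ a b : Fin n, A.r a b → j a = j b) then ej 𝕜 d n q ξ j else 0 :=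
          Finset.sum_congr rfl fun j _ => eSet_mul_ej 𝕜 d n q ξ hξ hdk A j
      _ = _ := (Finset.sum_filter _ _).symm
  rw [hLHS]
  have hmaps : ∀ j ∈ Finset.univ.filter
      (fun j : Fin n → ZMod d => ∀ a b : Fin n, A.r a b → j a = j b),
      kerS d n j ∈ Finset.univ.filter (fun B : Setoid (Fin n) => A ≤ B) := by
    intro j hj
    rw [Finset.mem_filter] at hj ⊢
    refine ⟨Finset.mem_univ _, ?_⟩
    intro x y hxy
    exact hj.2 x y hxy
  rw [← Finset.sum_fiberwise_of_maps_to hmaps (ej 𝕜 d n q ξ)]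
  refine Finset.sum_congr rfl ?_
  intro B hB
  have hAB : A ≤ B := (Finset.mem_filter.mp hB).2
  show _ = ebar 𝕜 d n q ξ B
  unfold ebar
  refine Finset.sum_congr ?_ (fun _ _ => rfl)
  ext j
  rw [Finset.mem_filter, Finset.mem_filter, JA, Finset.mem_filter]
  constructor
  · rintro ⟨⟨_, hSA⟩, hker⟩
    refine ⟨Finset.mem_univ _, ?_⟩
    intro a b
    rw [← hker]
    exact Iff.rfl
  · rintro ⟨_, hJ⟩
    refine ⟨⟨Finset.mem_univ _, ?_⟩, ?_⟩
    · intro a b hab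
      exact (hJ a b).mpr (hAB hab)
    · apply Setoid.ext
      intro a b
      exact hJ a b


open YH in
/-- if `𝕜` contains a primitive `d`-th root of unity `ξ`, then in `Y_{d,n}(q)`,
for every `A ∈ SetPar_n`, `e(A) = Σ_{B ⊇ A} ē(B)`, where `A ⊆ B` means that every block of
`B` is a union of blocks of `A` (i.e. `A ≤ B` as equivalence relations). -/
theorem statement4 (𝕜 : Type) [Field 𝕜] (d n : ℕ) [NeZero d] (hn : 0 < n)
    (hdk : (d : 𝕜) ≠ 0) (q : 𝕜) (hq0 : q ≠ 0) (hq1 : q ≠ 1)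
    (ξ : 𝕜) (hξ : IsPrimitiveRoot ξ d) :
    ∀ A : Setoid (Fin n),
      eSet 𝕜 d n q A
        = ∑ B ∈ Finset.univ.filter (fun B : Setoid (Fin n) => A ≤ B),
            ebar 𝕜 d n q ξ B :=
  statement4' 𝕜 d n hn hdk q hq0 hq1 ξ hξ

end
end

section
/- Assume 𝕜 contains a primitive d-th root of unity ξ. Then the set { ē(A) : A ∈ SetPar_n, ē(A) ≠ 0 } is a 𝕜-basis of the unital 𝕜-subalgebra of Y_{d,n}(q) generated by { e(A) : A ∈ SetPar_n }. -/
open scoped Classical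

noncomputable section

namespace YHAux

open YH Finset

variable (𝕜 : Type) [Field 𝕜] (d n : ℕ) (q : 𝕜)

/-! ### Basic consequences of the defining relations -/

theorem t_pow_d (a : Fin n) : t 𝕜 d n q a ^ d = 1 := by
  have h := RingQuot.mkAlgHom_rel 𝕜 (Rel.torder (𝕜 := 𝕜) (d := d) (n := n) (q := q) a)
  rw [map_pow, map_one] at h
  exact h

theorem t_commute (a b : Fin n) : Commute (t 𝕜 d n q a) (t 𝕜 d n q b) := by
  have h := RingQuot.mkAlgHom_rel 𝕜 (Rel.tcomm (𝕜 := 𝕜) (d := d) (n := n) (q := q) a b)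
  rw [map_mul, map_mul] at h
  exact h

theorem t_pow_mod (a : Fin n) (x : ℕ) : t 𝕜 d n q a ^ x = t 𝕜 d n q a ^ (x % d) := by
  conv_lhs => rw [← Nat.div_add_mod x d]
  rw [pow_add, pow_mul, t_pow_d, one_pow, one_mul]

theorem t_pow_congr (a : Fin n) {x y : ℕ} (h : (x : ZMod d) = (y : ZMod d)) :
    t 𝕜 d n q a ^ x = t 𝕜 d n q a ^ y := by
  rw [t_pow_mod 𝕜 d n q a x, t_pow_mod 𝕜 d n q a y,
    (ZMod.natCast_eq_natCast_iff' x y d).mp h]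

variable [NeZero d]

/-- `t a ^ m.val` for `m : ZMod d`. -/
def uPy (a : Fin n) (m : ZMod d) : Y 𝕜 d n q := t 𝕜 d n q a ^ m.val

theorem uPy_zero (a : Fin n) : uPy 𝕜 d n q a 0 = 1 := by
  simp [uPy, ZMod.val_zero]

theorem uPy_add (a : Fin n) (m m' : ZMod d) :
    uPy 𝕜 d n q a (m + m') = uPy 𝕜 d n q a m * uPy 𝕜 d n q a m' := by
  simp only [uPy]
  rw [← pow_add]
  apply t_pow_congr
  push_cast [ZMod.natCast_val, ZMod.cast_id]
  ring

theorem uPy_commute (a b : Fin n) (m m' : ZMod d) :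
    Commute (uPy 𝕜 d n q a m) (uPy 𝕜 d n q b m') :=
  (t_commute 𝕜 d n q a b).pow_pow _ _

/-! ### General list lemmas -/

theorem list_prod_mul {α : Type} {M : Type} [Monoid M] (l : List α) (f g : α → M)
    (h : ∀ a b, Commute (f a) (g b)) :
    (l.map f).prod * (l.map g).prod = (l.map fun a => f a * g a).prod := by
  induction l with
  | nil => simp
  | cons x l ih =>
    simp only [List.map_cons, List.prod_cons]
    have hx : Commute (g x) ((l.map f).prod) := by
      apply Commute.list_prod_right
      intro y hy
      obtain ⟨a, _, rfl⟩ := List.mem_map.mp hy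
      exact (h a x).symm
    rw [mul_assoc, ← mul_assoc (l.map f).prod, ← hx.eq, mul_assoc (g x), ← mul_assoc (f x),
      ih]

theorem list_prod_eq_single {α : Type} {M : Type} [Monoid M] (l : List α) (f : α → M) (a : α)
    (ha : a ∈ l) (hl : l.Nodup) (h1 : ∀ b ∈ l, b ≠ a → f b = 1) : (l.map f).prod = f a := by
  induction l with
  | nil => cases ha
  | cons x l ih =>
    simp only [List.map_cons, List.prod_cons]
    rcases List.mem_cons.mp ha with rfl | ha'
    · have hrest : (l.map f).prod = 1 := by
        apply List.prod_eq_one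
        intro y hy
        obtain ⟨b, hb, rfl⟩ := List.mem_map.mp hy
        exact h1 b (List.mem_cons_of_mem _ hb)
          (fun hba => (List.nodup_cons.mp hl).1 (hba ▸ hb))
      rw [hrest, mul_one]
    · have hxa : x ≠ a := fun hxa => (List.nodup_cons.mp hl).1 (hxa ▸ ha')
      rw [h1 x List.mem_cons_self hxa, one_mul,
        ih ha' (List.nodup_cons.mp hl).2
          (fun b hb hba => h1 b (List.mem_cons_of_mem _ hb) hba)]

/-! ### The group algebra and the morphism `Φ` -/

/-- The group algebra of `(ℤ/dℤ)^n`. -/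
abbrev R : Type := AddMonoidAlgebra 𝕜 (Fin n → ZMod d)

/-- The monoid homomorphism sending a group element to the corresponding product of `t`'s. -/
def φfun : Multiplicative (Fin n → ZMod d) →* Y 𝕜 d n q where
  toFun g := ((List.finRange n).map (fun a => uPy 𝕜 d n q a (Multiplicative.toAdd g a))).prod
  map_one' := by
    apply List.prod_eq_one
    intro y hy
    obtain ⟨a, _, rfl⟩ := List.mem_map.mp hy
    exact uPy_zero 𝕜 d n q a
  map_mul' g g' := by
    show ((List.finRange n).map
        (fun a => uPy 𝕜 d n q a (Multiplicative.toAdd (g * g') a))).prod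
      = ((List.finRange n).map (fun a => uPy 𝕜 d n q a (Multiplicative.toAdd g a))).prod *
        ((List.finRange n).map (fun a => uPy 𝕜 d n q a (Multiplicative.toAdd g' a))).prod
    rw [list_prod_mul _ _ _ (fun a b => uPy_commute 𝕜 d n q a b _ _)]
    apply congrArg
    apply List.map_congr_left
    intro a _
    exact uPy_add 𝕜 d n q a _ _

/-- The algebra morphism from the group algebra of `(ℤ/dℤ)^n` to `Y`. -/
def Φ : R 𝕜 d n →ₐ[𝕜] Y 𝕜 d n q :=
  AddMonoidAlgebra.lift 𝕜 (Y 𝕜 d n q) (Fin n → ZMod d) (φfun 𝕜 d n q)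

/-- The group element supported at `a` with value `m`, inside the group algebra. -/
def σR (a : Fin n) (m : ZMod d) : R 𝕜 d n := AddMonoidAlgebra.single (Pi.single a m) 1

theorem σR_mul (a : Fin n) (m m' : ZMod d) :
    σR 𝕜 d n a m * σR 𝕜 d n a m' = σR 𝕜 d n a (m + m') := by
  simp only [σR]
  rw [AddMonoidAlgebra.single_mul_single, one_mul, ← Pi.single_add]

theorem σR_zero (a : Fin n) : σR 𝕜 d n a 0 = 1 := by
  simp only [σR, Pi.single_zero]
  exact (AddMonoidAlgebra.one_def).symm

theorem Φ_σR (a : Fin n) (m : ZMod d) : Φ 𝕜 d n q (σR 𝕜 d n a m) = uPy 𝕜 d n q a m := by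
  simp only [Φ, σR]
  rw [AddMonoidAlgebra.lift_single, one_smul]
  simp only [φfun, MonoidHom.coe_mk, OneHom.coe_mk, toAdd_ofAdd]
  rw [list_prod_eq_single _ _ a (List.mem_finRange a) (List.nodup_finRange n)
    (fun b _ hba => by rw [Pi.single_eq_of_ne hba, uPy_zero]), Pi.single_eq_same]

/-! ### Characters of `ℤ/dℤ` -/

/-- The character `c ↦ ξ^(c.val)`. -/
def chiF (ξ : 𝕜) (c : ZMod d) : 𝕜 := ξ ^ c.val

theorem pow_val_mod {ξ : 𝕜} (hξ1 : ξ ^ d = 1) (x : ℕ) : ξ ^ x = ξ ^ (x % d) := by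
  conv_lhs => rw [← Nat.div_add_mod x d]
  rw [pow_add, pow_mul, hξ1, one_pow, one_mul]

theorem chiF_natCast {ξ : 𝕜} (hξ1 : ξ ^ d = 1) (x : ℕ) :
    chiF 𝕜 d ξ (x : ZMod d) = ξ ^ x := by
  simp only [chiF]
  rw [ZMod.val_natCast, ← pow_val_mod 𝕜 d hξ1]

theorem chiF_zero (ξ : 𝕜) : chiF 𝕜 d ξ 0 = 1 := by
  simp only [chiF, ZMod.val_zero, pow_zero]

theorem chiF_add {ξ : 𝕜} (hξ1 : ξ ^ d = 1) (c c' : ZMod d) :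
    chiF 𝕜 d ξ (c + c') = chiF 𝕜 d ξ c * chiF 𝕜 d ξ c' := by
  have h : c + c' = ((c.val + c'.val : ℕ) : ZMod d) := by
    push_cast [ZMod.natCast_val, ZMod.cast_id]
    ring
  rw [h, chiF_natCast 𝕜 d hξ1, pow_add]
  rfl

theorem chiF_mul_nat {ξ : 𝕜} (hξ1 : ξ ^ d = 1) (c : ZMod d) (r : ℕ) :
    chiF 𝕜 d ξ (c * (r : ZMod d)) = chiF 𝕜 d ξ c ^ r := by
  induction r with
  | zero => simp [chiF_zero]
  | succ r ih =>
    have h : c * ((r + 1 : ℕ) : ZMod d) = c * (r : ZMod d) + c := by push_cast; ring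
    rw [h, chiF_add 𝕜 d hξ1, ih, pow_succ]

theorem zsum_eq {M : Type} [AddCommMonoid M] (f : ZMod d → M) :
    ∑ m : ZMod d, f m = ∑ r ∈ Finset.range d, f (r : ZMod d) := by
  refine Finset.sum_nbij' (fun (m : ZMod d) => m.val) (fun r => (r : ZMod d)) ?_ ?_ ?_ ?_ ?_
  · intro a _
    exact mem_range.mpr (ZMod.val_lt a)
  · intro r _
    exact mem_univ _
  · intro a _
    exact ZMod.natCast_zmod_val a
  · intro r hr
    exact ZMod.val_cast_of_lt (mem_range.mp hr)
  · intro a _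
    rw [ZMod.natCast_zmod_val a]

theorem chiF_geom {ξ : 𝕜} (hξ : IsPrimitiveRoot ξ d) (c : ZMod d) :
    ∑ r ∈ Finset.range d, chiF 𝕜 d ξ c ^ r = if c = 0 then (d : 𝕜) else 0 := by
  split_ifs with h
  · subst h
    simp [chiF_zero]
  · have h1 : chiF 𝕜 d ξ c ≠ 1 := by
      apply hξ.pow_ne_one_of_pos_of_lt
      · exact (fun h0 => h ((ZMod.val_eq_zero c).mp h0))
      · exact ZMod.val_lt c
    rw [geom_sum_eq h1]
    have h2 : chiF 𝕜 d ξ c ^ d = 1 := by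
      simp only [chiF]
      rw [← pow_mul, mul_comm, pow_mul, hξ.pow_eq_one, one_pow]
    rw [h2, sub_self, zero_div]

theorem chiF_orth {ξ : 𝕜} (hξ : IsPrimitiveRoot ξ d) (c : ZMod d) :
    ∑ m : ZMod d, chiF 𝕜 d ξ (c * m) = if c = 0 then (d : 𝕜) else 0 := by
  rw [zsum_eq d (fun m => chiF 𝕜 d ξ (c * m)), ← chiF_geom 𝕜 d hξ c]
  exact Finset.sum_congr rfl fun r _ => chiF_mul_nat 𝕜 d hξ.pow_eq_one c r

/-! ### Fourier idempotents in the group algebra -/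

/-- The Fourier idempotent at site `a` with character `k`. -/
def fIR (ξ : 𝕜) (a : Fin n) (k : ZMod d) : R 𝕜 d n :=
  (d : 𝕜)⁻¹ • ∑ m : ZMod d, chiF 𝕜 d ξ (-k * m) • σR 𝕜 d n a m

theorem σR_mul_fIR {ξ : 𝕜} (hξ1 : ξ ^ d = 1) (a : Fin n) (m k : ZMod d) :
    σR 𝕜 d n a m * fIR 𝕜 d n ξ a k = chiF 𝕜 d ξ (k * m) • fIR 𝕜 d n ξ a k := by
  have key : σR 𝕜 d n a m * ∑ m' : ZMod d, chiF 𝕜 d ξ (-k * m') • σR 𝕜 d n a m'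
      = chiF 𝕜 d ξ (k * m) • ∑ m' : ZMod d, chiF 𝕜 d ξ (-k * m') • σR 𝕜 d n a m' := by
    rw [Finset.mul_sum, Finset.smul_sum]
    have lhs_eq : ∀ m' : ZMod d,
        σR 𝕜 d n a m * (chiF 𝕜 d ξ (-k * m') • σR 𝕜 d n a m')
          = chiF 𝕜 d ξ (-k * m') • σR 𝕜 d n a (m + m') := fun m' => by
      rw [mul_smul_comm, σR_mul]
    rw [Finset.sum_congr rfl fun m' _ => lhs_eq m']
    apply Fintype.sum_equiv (Equiv.addLeft m)
    intro m'
    simp only [Equiv.coe_addLeft]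
    rw [smul_smul, ← chiF_add 𝕜 d hξ1]
    congr 2
    ring
  rw [show fIR 𝕜 d n ξ a k
      = (d : 𝕜)⁻¹ • ∑ m' : ZMod d, chiF 𝕜 d ξ (-k * m') • σR 𝕜 d n a m' from rfl,
    mul_smul_comm, key, smul_comm]

theorem fIR_mul {ξ : 𝕜} (hξ : IsPrimitiveRoot ξ d) (hd : (d : 𝕜) ≠ 0) (a : Fin n)
    (k l : ZMod d) :
    fIR 𝕜 d n ξ a k * fIR 𝕜 d n ξ a l = if k = l then fIR 𝕜 d n ξ a k else 0 := by
  have hexp : fIR 𝕜 d n ξ a k * fIR 𝕜 d n ξ a l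
      = (d : 𝕜)⁻¹ • ∑ m : ZMod d, (chiF 𝕜 d ξ (-k * m) • σR 𝕜 d n a m) * fIR 𝕜 d n ξ a l := by
    conv_lhs => rw [show fIR 𝕜 d n ξ a k
      = (d : 𝕜)⁻¹ • ∑ m : ZMod d, chiF 𝕜 d ξ (-k * m) • σR 𝕜 d n a m from rfl]
    rw [smul_mul_assoc, Finset.sum_mul]
  have step : ∀ m : ZMod d,
      (chiF 𝕜 d ξ (-k * m) • σR 𝕜 d n a m) * fIR 𝕜 d n ξ a l
        = chiF 𝕜 d ξ ((l - k) * m) • fIR 𝕜 d n ξ a l := by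
    intro m
    rw [smul_mul_assoc, σR_mul_fIR 𝕜 d n hξ.pow_eq_one, smul_smul,
      ← chiF_add 𝕜 d hξ.pow_eq_one]
    congr 2
    ring
  rw [hexp, Finset.sum_congr rfl fun m _ => step m, ← Finset.sum_smul,
    chiF_orth 𝕜 d hξ (l - k)]
  rcases eq_or_ne k l with rfl | hkl
  · rw [if_pos rfl, sub_self, if_pos rfl, smul_smul, inv_mul_cancel₀ hd, one_smul]
  · rw [if_neg hkl, if_neg (fun h => hkl (sub_eq_zero.mp h).symm), zero_smul, smul_zero]

theorem sum_fIR {ξ : 𝕜} (hξ : IsPrimitiveRoot ξ d) (hd : (d : 𝕜) ≠ 0) (a : Fin n) :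
    ∑ k : ZMod d, fIR 𝕜 d n ξ a k = 1 := by
  simp only [fIR]
  rw [← Finset.smul_sum, Finset.sum_comm]
  have step : ∀ m : ZMod d,
      ∑ k : ZMod d, chiF 𝕜 d ξ (-k * m) • σR 𝕜 d n a m
        = (if m = 0 then (d : 𝕜) else 0) • σR 𝕜 d n a m := by
    intro m
    rw [← Finset.sum_smul]
    congr 1
    rw [Finset.sum_congr rfl fun k _ => by rw [show -k * m = -m * k from by ring],
      chiF_orth 𝕜 d hξ (-m)]
    simp only [neg_eq_zero]
  rw [Finset.sum_congr rfl fun m _ => step m]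
  have hsum : ∑ m : ZMod d, (if m = 0 then (d : 𝕜) else 0) • σR 𝕜 d n a m
      = (d : 𝕜) • σR 𝕜 d n a 0 := by
    rw [Finset.sum_eq_single 0]
    · rw [if_pos rfl]
    · intro m _ hm
      rw [if_neg hm, zero_smul]
    · intro h
      exact absurd (mem_univ 0) h
  rw [hsum, σR_zero, smul_smul, inv_mul_cancel₀ hd, one_smul]

/-! ### The idempotents `e(j)` in the group algebra -/

def ejR (ξ : 𝕜) (j : Fin n → ZMod d) : R 𝕜 d n := ∏ a : Fin n, fIR 𝕜 d n ξ a (j a)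

theorem ejR_mul {ξ : 𝕜} (hξ : IsPrimitiveRoot ξ d) (hd : (d : 𝕜) ≠ 0)
    (j j' : Fin n → ZMod d) :
    ejR 𝕜 d n ξ j * ejR 𝕜 d n ξ j' = if j = j' then ejR 𝕜 d n ξ j else 0 := by
  simp only [ejR]
  rw [← Finset.prod_mul_distrib]
  split_ifs with h
  · subst h
    apply Finset.prod_congr rfl
    intro a _
    rw [fIR_mul 𝕜 d n hξ hd, if_pos rfl]
  · obtain ⟨a, ha⟩ := Function.ne_iff.mp h
    apply Finset.prod_eq_zero (mem_univ a)
    rw [fIR_mul 𝕜 d n hξ hd, if_neg ha]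

theorem sum_ejR {ξ : 𝕜} (hξ : IsPrimitiveRoot ξ d) (hd : (d : 𝕜) ≠ 0) :
    ∑ j : Fin n → ZMod d, ejR 𝕜 d n ξ j = 1 := by
  have h := Finset.prod_univ_sum (fun _ : Fin n => (univ : Finset (ZMod d)))
    (fun a k => fIR 𝕜 d n ξ a k)
  rw [Fintype.piFinset_univ] at h
  calc ∑ j : Fin n → ZMod d, ejR 𝕜 d n ξ j
      = ∏ a : Fin n, ∑ k : ZMod d, fIR 𝕜 d n ξ a k := h.symm
    _ = ∏ a : Fin n, (1 : R 𝕜 d n) := by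
        apply Finset.prod_congr rfl
        intro a _
        exact sum_fIR 𝕜 d n hξ hd a
    _ = 1 := Finset.prod_const_one

theorem σR_mul_ejR {ξ : 𝕜} (hξ1 : ξ ^ d = 1) (a : Fin n) (m : ZMod d)
    (j : Fin n → ZMod d) :
    σR 𝕜 d n a m * ejR 𝕜 d n ξ j = chiF 𝕜 d ξ (j a * m) • ejR 𝕜 d n ξ j := by
  simp only [ejR]
  rw [← Finset.mul_prod_erase univ _ (mem_univ a), ← mul_assoc,
    σR_mul_fIR 𝕜 d n hξ1, smul_mul_assoc]

/-! ### The elements `e_{ab}` in the group algebra -/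

def eabR (a b : Fin n) : R 𝕜 d n :=
  (d : 𝕜)⁻¹ • ∑ m : ZMod d, σR 𝕜 d n a m * σR 𝕜 d n b (-m)

theorem eabR_symm (a b : Fin n) : eabR 𝕜 d n a b = eabR 𝕜 d n b a := by
  simp only [eabR]
  congr 1
  apply Fintype.sum_equiv (Equiv.neg (ZMod d))
  intro m
  rw [Equiv.neg_apply, neg_neg, mul_comm]

theorem eabR_mul_ejR {ξ : 𝕜} (hξ : IsPrimitiveRoot ξ d) (hd : (d : 𝕜) ≠ 0)
    (a b : Fin n) (j : Fin n → ZMod d) :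
    eabR 𝕜 d n a b * ejR 𝕜 d n ξ j
      = (if j a = j b then (1 : 𝕜) else 0) • ejR 𝕜 d n ξ j := by
  rw [show eabR 𝕜 d n a b
      = (d : 𝕜)⁻¹ • ∑ m : ZMod d, σR 𝕜 d n a m * σR 𝕜 d n b (-m) from rfl,
    smul_mul_assoc, Finset.sum_mul]
  have step : ∀ m : ZMod d,
      σR 𝕜 d n a m * σR 𝕜 d n b (-m) * ejR 𝕜 d n ξ j
        = chiF 𝕜 d ξ ((j a - j b) * m) • ejR 𝕜 d n ξ j := by
    intro m
    rw [mul_assoc, σR_mul_ejR 𝕜 d n hξ.pow_eq_one, mul_smul_comm,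
      σR_mul_ejR 𝕜 d n hξ.pow_eq_one, smul_smul, ← chiF_add 𝕜 d hξ.pow_eq_one]
    congr 2
    ring
  rw [Finset.sum_congr rfl fun m _ => step m, ← Finset.sum_smul,
    chiF_orth 𝕜 d hξ (j a - j b)]
  rcases eq_or_ne (j a) (j b) with he | he
  · rw [if_pos (sub_eq_zero.mpr he), if_pos he, smul_smul, inv_mul_cancel₀ hd, one_smul]
  · rw [if_neg (fun h => he (sub_eq_zero.mp h)), if_neg he, zero_smul, smul_zero]

/-! ### The elements `e(A)` in the group algebra -/

def eSetR (A : Setoid (Fin n)) : R 𝕜 d n :=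
  ∏ p : Fin n × Fin n, if A.r p.1 p.2 ∧ p.1 ≠ p.2 then eabR 𝕜 d n p.1 p.2 else 1

theorem prod_eigen {β : Type} (s : Finset β) (F : β → R 𝕜 d n) (c : β → 𝕜) (v : R 𝕜 d n)
    (h : ∀ x ∈ s, F x * v = c x • v) :
    (∏ x ∈ s, F x) * v = (∏ x ∈ s, c x) • v := by
  classical
  induction s using Finset.induction_on with
  | empty => simp
  | @insert a s hx ih =>
    rw [Finset.prod_insert hx, Finset.prod_insert hx, mul_assoc,
      ih (fun x hxs => h x (mem_insert_of_mem hxs)), mul_smul_comm,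
      h a (mem_insert_self a s), smul_smul, mul_comm (∏ x ∈ s, c x)]

theorem eSetR_mul_ejR {ξ : 𝕜} (hξ : IsPrimitiveRoot ξ d) (hd : (d : 𝕜) ≠ 0)
    (A : Setoid (Fin n)) (j : Fin n → ZMod d) :
    eSetR 𝕜 d n A * ejR 𝕜 d n ξ j
      = (if (∀ a b : Fin n, A.r a b → j a = j b) then (1 : 𝕜) else 0) • ejR 𝕜 d n ξ j := by
  rw [show eSetR 𝕜 d n A = ∏ p : Fin n × Fin n,
      (if A.r p.1 p.2 ∧ p.1 ≠ p.2 then eabR 𝕜 d n p.1 p.2 else 1) from rfl,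
    prod_eigen 𝕜 d n univ _
      (fun p => if A.r p.1 p.2 ∧ p.1 ≠ p.2 then (if j p.1 = j p.2 then (1 : 𝕜) else 0) else 1)
      _ (fun p _ => by
        by_cases h1 : A.r p.1 p.2 ∧ p.1 ≠ p.2
        · simp only [if_pos h1]
          exact eabR_mul_ejR 𝕜 d n hξ hd p.1 p.2 j
        · simp only [if_neg h1, one_mul, one_smul])]
  congr 1
  by_cases H : ∀ a b : Fin n, A.r a b → j a = j b
  · rw [if_pos H]
    apply Finset.prod_eq_one
    intro p _
    split_ifs with h1 h2
    · rfl
    · exact absurd (H p.1 p.2 h1.1) h2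
    · rfl
  · rw [if_neg H]
    push_neg at H
    obtain ⟨a, b, hab, hne⟩ := H
    have hab' : a ≠ b := fun h => hne (by rw [h])
    apply Finset.prod_eq_zero (mem_univ (a, b))
    rw [if_pos ⟨hab, hab'⟩, if_neg hne]

/-! ### Set partitions attached to tuples -/

def BofR (j : Fin n → ZMod d) : Setoid (Fin n) :=
  ⟨fun a b => j a = j b, ⟨fun _ => rfl, fun h => h.symm, fun h1 h2 => h1.trans h2⟩⟩

theorem setoid_eq_of {A B : Setoid (Fin n)} (h : ∀ a b, A.r a b ↔ B.r a b) : A = B := by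
  obtain ⟨ra, ha⟩ := A
  obtain ⟨rb, hb⟩ := B
  have hr : ra = rb := funext fun a => funext fun b => propext (h a b)
  subst hr
  rfl

theorem mem_JA {B : Setoid (Fin n)} {j : Fin n → ZMod d} :
    j ∈ JA d n B ↔ B = BofR d n j := by
  rw [JA, mem_filter]
  simp only [mem_univ, true_and]
  constructor
  · intro h
    exact setoid_eq_of n (fun a b => (h a b).symm)
  · rintro rfl
    exact fun a b => Iff.rfl

def ebarR (ξ : 𝕜) (A : Setoid (Fin n)) : R 𝕜 d n := ∑ j ∈ JA d n A, ejR 𝕜 d n ξ j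

theorem le_iff_BofR {A : Setoid (Fin n)} {j : Fin n → ZMod d} :
    A ≤ BofR d n j ↔ ∀ a b : Fin n, A.r a b → j a = j b := by
  constructor
  · intro h a b hab
    exact h hab
  · intro h x y hxy
    exact h x y hxy

theorem eSetR_eq {ξ : 𝕜} (hξ : IsPrimitiveRoot ξ d) (hd : (d : 𝕜) ≠ 0) (A : Setoid (Fin n)) :
    eSetR 𝕜 d n A = ∑ B ∈ univ.filter (fun B => A ≤ B), ebarR 𝕜 d n ξ B := by
  have h1 : eSetR 𝕜 d n A
      = ∑ j ∈ univ.filter (fun j : Fin n → ZMod d => ∀ a b : Fin n, A.r a b → j a = j b),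
          ejR 𝕜 d n ξ j := by
    calc eSetR 𝕜 d n A = eSetR 𝕜 d n A * ∑ j : Fin n → ZMod d, ejR 𝕜 d n ξ j := by
          rw [sum_ejR 𝕜 d n hξ hd, mul_one]
      _ = ∑ j : Fin n → ZMod d, eSetR 𝕜 d n A * ejR 𝕜 d n ξ j := Finset.mul_sum _ _ _
      _ = ∑ j : Fin n → ZMod d,
            (if (∀ a b : Fin n, A.r a b → j a = j b) then (1 : 𝕜) else 0) • ejR 𝕜 d n ξ j :=
          Finset.sum_congr rfl (fun j _ => eSetR_mul_ejR 𝕜 d n hξ hd A j)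
      _ = _ := by
          rw [Finset.sum_filter]
          apply Finset.sum_congr rfl
          intro j _
          split_ifs with h
          · rw [one_smul]
          · rw [zero_smul]
  rw [h1]
  have hmaps : ∀ j ∈ univ.filter
      (fun j : Fin n → ZMod d => ∀ a b : Fin n, A.r a b → j a = j b),
      BofR d n j ∈ univ.filter (fun B => A ≤ B) := by
    intro j hj
    rw [mem_filter] at hj ⊢
    exact ⟨mem_univ _, (le_iff_BofR d n).mpr hj.2⟩
  rw [← Finset.sum_fiberwise_of_maps_to hmaps (ejR 𝕜 d n ξ)]
  apply Finset.sum_congr rfl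
  intro B hB
  rw [show ebarR 𝕜 d n ξ B = ∑ j ∈ JA d n B, ejR 𝕜 d n ξ j from rfl]
  apply Finset.sum_congr _ (fun _ _ => rfl)
  ext j
  simp only [mem_filter, mem_JA, mem_univ, true_and]
  constructor
  · rintro ⟨h1', h2'⟩
    exact h2'.symm
  · rintro rfl
    exact ⟨(le_iff_BofR d n).mp (mem_filter.mp hB).2, rfl⟩

theorem one_eq_sum_ebarR {ξ : 𝕜} (hξ : IsPrimitiveRoot ξ d) (hd : (d : 𝕜) ≠ 0) :
    (1 : R 𝕜 d n) = ∑ B : Setoid (Fin n), ebarR 𝕜 d n ξ B := by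
  rw [← sum_ejR 𝕜 d n hξ hd, ← Finset.sum_fiberwise univ (BofR d n) (ejR 𝕜 d n ξ)]
  apply Finset.sum_congr rfl
  intro B _
  rw [show ebarR 𝕜 d n ξ B = ∑ j ∈ JA d n B, ejR 𝕜 d n ξ j from rfl]
  apply Finset.sum_congr _ (fun _ _ => rfl)
  ext j
  simp only [mem_filter, mem_JA, mem_univ, true_and]
  exact ⟨fun h => h.symm, fun h => h.symm⟩

theorem ebarR_mul {ξ : 𝕜} (hξ : IsPrimitiveRoot ξ d) (hd : (d : 𝕜) ≠ 0)
    (A B : Setoid (Fin n)) :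
    ebarR 𝕜 d n ξ A * ebarR 𝕜 d n ξ B = if A = B then ebarR 𝕜 d n ξ A else 0 := by
  rw [show ebarR 𝕜 d n ξ A = ∑ j ∈ JA d n A, ejR 𝕜 d n ξ j from rfl,
    show ebarR 𝕜 d n ξ B = ∑ j ∈ JA d n B, ejR 𝕜 d n ξ j from rfl,
    Finset.sum_mul_sum]
  have step : ∀ j ∈ JA d n A,
      ∑ j' ∈ JA d n B, ejR 𝕜 d n ξ j * ejR 𝕜 d n ξ j'
        = if j ∈ JA d n B then ejR 𝕜 d n ξ j else 0 := by
    intro j _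
    rw [Finset.sum_congr rfl fun j' _ => ejR_mul 𝕜 d n hξ hd j j',
      Finset.sum_ite_eq (JA d n B) j (fun _ => ejR 𝕜 d n ξ j)]
  rw [Finset.sum_congr rfl step]
  rcases eq_or_ne A B with rfl | hAB
  · rw [if_pos rfl]
    apply Finset.sum_congr rfl
    intro j hj
    rw [if_pos hj]
  · rw [if_neg hAB]
    apply Finset.sum_eq_zero
    intro j hj
    rw [if_neg]
    intro hj'
    exact hAB (((mem_JA d n).mp hj).trans ((mem_JA d n).mp hj').symm)

/-! ### Transfer to `Y` via `Φ` -/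

theorem Φ_fIR (ξ : 𝕜) (a : Fin n) (k : ZMod d) :
    Φ 𝕜 d n q (fIR 𝕜 d n ξ a k)
      = (d : 𝕜)⁻¹ • ∑ r ∈ Finset.range d,
          ξ ^ ((-k * (r : ZMod d)).val) • t 𝕜 d n q a ^ r := by
  simp only [fIR, map_smul, map_sum, Φ_σR]
  congr 1
  rw [zsum_eq d (fun m => chiF 𝕜 d ξ (-k * m) • uPy 𝕜 d n q a m)]
  apply Finset.sum_congr rfl
  intro r hr
  rw [show uPy 𝕜 d n q a ((r : ℕ) : ZMod d)
      = t 𝕜 d n q a ^ (((r : ℕ) : ZMod d).val) from rfl,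
    ZMod.val_cast_of_lt (mem_range.mp hr)]
  rfl

theorem Φ_ejR (ξ : 𝕜) (j : Fin n → ZMod d) :
    ej 𝕜 d n q ξ j = Φ 𝕜 d n q (ejR 𝕜 d n ξ j) := by
  rw [show ejR 𝕜 d n ξ j = ∏ a : Fin n, fIR 𝕜 d n ξ a (j a) from rfl, Fin.prod_univ_def,
    map_list_prod (Φ 𝕜 d n q), List.map_map,
    show ej 𝕜 d n q ξ j = ((List.finRange n).map (fun a =>
      (d : 𝕜)⁻¹ • ∑ r ∈ Finset.range d,
        ξ ^ (((-(j a)) * (r : ZMod d)).val) • t 𝕜 d n q a ^ r)).prod from rfl]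
  congr 1
  apply List.map_congr_left
  intro a _
  exact (Φ_fIR 𝕜 d n q ξ a (j a)).symm

theorem Φ_eabAux (a b : Fin n) :
    eabAux 𝕜 d n q a b = Φ 𝕜 d n q (eabR 𝕜 d n a b) := by
  rw [show eabR 𝕜 d n a b
      = (d : 𝕜)⁻¹ • ∑ m : ZMod d, σR 𝕜 d n a m * σR 𝕜 d n b (-m) from rfl,
    map_smul, map_sum]
  simp only [map_mul, Φ_σR]
  rw [zsum_eq d (fun m => uPy 𝕜 d n q a m * uPy 𝕜 d n q b (-m)),
    show eabAux 𝕜 d n q a b = (d : 𝕜)⁻¹ • ∑ r ∈ Finset.range d,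
      t 𝕜 d n q a ^ r * t 𝕜 d n q b ^ ((d - r) % d) from rfl]
  congr 1
  apply Finset.sum_congr rfl
  intro r hr
  have h1 : uPy 𝕜 d n q a ((r : ℕ) : ZMod d) = t 𝕜 d n q a ^ r := by
    rw [show uPy 𝕜 d n q a ((r : ℕ) : ZMod d)
        = t 𝕜 d n q a ^ (((r : ℕ) : ZMod d).val) from rfl,
      ZMod.val_cast_of_lt (mem_range.mp hr)]
  have h2 : uPy 𝕜 d n q b (-((r : ℕ) : ZMod d)) = t 𝕜 d n q b ^ ((d - r) % d) := by
    rw [show uPy 𝕜 d n q b (-((r : ℕ) : ZMod d))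
        = t 𝕜 d n q b ^ ((-((r : ℕ) : ZMod d)).val) from rfl]
    apply t_pow_congr
    rw [ZMod.natCast_zmod_val, ZMod.natCast_mod,
      Nat.cast_sub (le_of_lt (mem_range.mp hr)), ZMod.natCast_self, zero_sub]
  rw [h1, h2]

theorem Φ_eab (a b : Fin n) : eab 𝕜 d n q a b = Φ 𝕜 d n q (eabR 𝕜 d n a b) := by
  rw [show eab 𝕜 d n q a b = (if (a : ℕ) ≤ (b : ℕ) then eabAux 𝕜 d n q a b
      else eabAux 𝕜 d n q b a) from rfl]
  split_ifs with h
  · exact Φ_eabAux 𝕜 d n q a b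
  · rw [Φ_eabAux 𝕜 d n q b a, eabR_symm]

theorem Φ_eSet (A : Setoid (Fin n)) :
    eSet 𝕜 d n q A = Φ 𝕜 d n q (eSetR 𝕜 d n A) := by
  have hfn : (fun p : Fin n × Fin n =>
      if A.r p.1 p.2 ∧ p.1 ≠ p.2 then eab 𝕜 d n q p.1 p.2 else 1)
      = (Φ 𝕜 d n q) ∘ (fun p : Fin n × Fin n =>
          if A.r p.1 p.2 ∧ p.1 ≠ p.2 then eabR 𝕜 d n p.1 p.2 else 1) := by
    funext p
    simp only [Function.comp_apply]
    split_ifs with h1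
    · exact Φ_eab 𝕜 d n q p.1 p.2
    · exact (map_one (Φ 𝕜 d n q)).symm
  rw [show eSet 𝕜 d n q A = (((List.finRange n) ×ˢ (List.finRange n)).map
      (fun p => if A.r p.1 p.2 ∧ p.1 ≠ p.2 then eab 𝕜 d n q p.1 p.2 else 1)).prod from rfl,
    hfn, ← List.map_map, ← map_list_prod (Φ 𝕜 d n q)]
  congr 1
  have hnd : (List.finRange n ×ˢ List.finRange n).Nodup :=
    (List.nodup_finRange n).product (List.nodup_finRange n)
  rw [← List.prod_toFinset _ hnd]
  have huniv : (List.finRange n ×ˢ List.finRange n).toFinset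
      = (univ : Finset (Fin n × Fin n)) := by
    ext p
    rcases p with ⟨p1, p2⟩
    simp [List.mem_product, List.mem_finRange]
  rw [huniv]
  rfl

theorem Φ_ebar (ξ : 𝕜) (A : Setoid (Fin n)) :
    ebar 𝕜 d n q ξ A = Φ 𝕜 d n q (ebarR 𝕜 d n ξ A) := by
  rw [show ebar 𝕜 d n q ξ A = ∑ j ∈ JA d n A, ej 𝕜 d n q ξ j from rfl,
    show ebarR 𝕜 d n ξ A = ∑ j ∈ JA d n A, ejR 𝕜 d n ξ j from rfl, map_sum]
  exact Finset.sum_congr rfl fun j _ => Φ_ejR 𝕜 d n q ξ j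

/-! ### Consequences in `Y` -/

theorem ebar_mul {ξ : 𝕜} (hξ : IsPrimitiveRoot ξ d) (hd : (d : 𝕜) ≠ 0)
    (A B : Setoid (Fin n)) :
    ebar 𝕜 d n q ξ A * ebar 𝕜 d n q ξ B = if A = B then ebar 𝕜 d n q ξ A else 0 := by
  rw [Φ_ebar, Φ_ebar, ← map_mul, ebarR_mul 𝕜 d n hξ hd, apply_ite (Φ 𝕜 d n q), map_zero,
    ← Φ_ebar]

theorem one_eq_sum_ebar {ξ : 𝕜} (hξ : IsPrimitiveRoot ξ d) (hd : (d : 𝕜) ≠ 0) :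
    (1 : Y 𝕜 d n q) = ∑ B : Setoid (Fin n), ebar 𝕜 d n q ξ B := by
  have h := congrArg (Φ 𝕜 d n q) (one_eq_sum_ebarR 𝕜 d n hξ hd)
  rw [map_one, map_sum] at h
  rw [h]
  exact Finset.sum_congr rfl fun B _ => (Φ_ebar 𝕜 d n q ξ B).symm

theorem eSet_eq_sum_ebar {ξ : 𝕜} (hξ : IsPrimitiveRoot ξ d) (hd : (d : 𝕜) ≠ 0)
    (A : Setoid (Fin n)) :
    eSet 𝕜 d n q A = ∑ B ∈ univ.filter (fun B => A ≤ B), ebar 𝕜 d n q ξ B := by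
  rw [Φ_eSet, eSetR_eq 𝕜 d n hξ hd, map_sum]
  exact Finset.sum_congr rfl fun B _ => (Φ_ebar 𝕜 d n q ξ B).symm

end YHAux

open YH in
/-- if `𝕜` contains a primitive `d`-th root of unity `ξ`, then
`{ē(A) : A ∈ SetPar_n, ē(A) ≠ 0}` is a `𝕜`-basis of the unital `𝕜`-subalgebra of
`Y_{d,n}(q)` generated by `{e(A) : A ∈ SetPar_n}`: the family is linearly independent and
spans that subalgebra. -/
theorem statement5 (𝕜 : Type) [Field 𝕜] (d n : ℕ) [NeZero d] (hn : 0 < n)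
    (hdk : (d : 𝕜) ≠ 0) (q : 𝕜) (hq0 : q ≠ 0) (hq1 : q ≠ 1)
    (ξ : 𝕜) (hξ : IsPrimitiveRoot ξ d) :
    LinearIndependent 𝕜
      (fun A : {A : Setoid (Fin n) // ebar 𝕜 d n q ξ A ≠ 0} => ebar 𝕜 d n q ξ A.1)
    ∧ Submodule.span 𝕜
        (Set.range (fun A : {A : Setoid (Fin n) // ebar 𝕜 d n q ξ A ≠ 0} =>
          ebar 𝕜 d n q ξ A.1))
      = Subalgebra.toSubmodule (Algebra.adjoin 𝕜 (Set.range (eSet 𝕜 d n q))) := by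
  classical
  have hmul := fun A B => YHAux.ebar_mul 𝕜 d n q hξ hdk A B
  have hone := YHAux.one_eq_sum_ebar 𝕜 d n q hξ hdk
  have heSet := fun A => YHAux.eSet_eq_sum_ebar 𝕜 d n q hξ hdk A
  have hadj : ∀ A : Setoid (Fin n),
      ebar 𝕜 d n q ξ A ∈ Algebra.adjoin 𝕜 (Set.range (eSet 𝕜 d n q)) := by
    intro A
    refine (wellFounded_gt (α := Setoid (Fin n))).induction
      (C := fun A => ebar 𝕜 d n q ξ A ∈ Algebra.adjoin 𝕜 (Set.range (eSet 𝕜 d n q))) A ?_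
    intro B IH
    have hmem : B ∈ Finset.univ.filter (fun C : Setoid (Fin n) => B ≤ C) := by
      simp only [Finset.mem_filter, Finset.mem_univ, true_and]
      exact le_refl B
    have hsplit : ebar 𝕜 d n q ξ B = eSet 𝕜 d n q B
        - ∑ C ∈ (Finset.univ.filter (fun C : Setoid (Fin n) => B ≤ C)).erase B,
            ebar 𝕜 d n q ξ C := by
      rw [heSet B, ← Finset.add_sum_erase _ _ hmem, add_sub_cancel_right]
    rw [hsplit]
    refine sub_mem (Algebra.subset_adjoin ⟨B, rfl⟩) (sum_mem ?_)
    intro C hC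
    exact IH C (lt_of_le_of_ne (Finset.mem_filter.mp (Finset.mem_of_mem_erase hC)).2
      (Ne.symm (Finset.ne_of_mem_erase hC)))
  constructor
  · haveI : Fintype {A : Setoid (Fin n) // ebar 𝕜 d n q ξ A ≠ 0} := Fintype.ofFinite _
    rw [Fintype.linearIndependent_iff]
    intro c hc i
    have h2 : (∑ i' : {A : Setoid (Fin n) // ebar 𝕜 d n q ξ A ≠ 0},
        c i' • ebar 𝕜 d n q ξ i'.1) * ebar 𝕜 d n q ξ i.1 = 0 := by
      rw [hc, zero_mul]
    rw [Finset.sum_mul] at h2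
    have h3 : ∀ i' : {A : Setoid (Fin n) // ebar 𝕜 d n q ξ A ≠ 0},
        (c i' • ebar 𝕜 d n q ξ i'.1) * ebar 𝕜 d n q ξ i.1
          = if i' = i then c i • ebar 𝕜 d n q ξ i.1 else 0 := by
      intro i'
      rw [smul_mul_assoc, hmul i'.1 i.1]
      by_cases h : i' = i
      · subst h
        simp
      · rw [if_neg (fun hh : i'.1 = i.1 => h (Subtype.ext hh)), smul_zero, if_neg h]
    rw [Finset.sum_congr rfl (fun i' _ => h3 i'),
      Finset.sum_ite_eq' Finset.univ i (fun _ => c i • ebar 𝕜 d n q ξ i.1),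
      if_pos (Finset.mem_univ i)] at h2
    rcases smul_eq_zero.mp h2 with h | h
    · exact h
    · exact absurd h i.2
  · have hVebar : ∀ A : Setoid (Fin n), ebar 𝕜 d n q ξ A ∈ Submodule.span 𝕜
        (Set.range (fun A : {A : Setoid (Fin n) // ebar 𝕜 d n q ξ A ≠ 0} =>
          ebar 𝕜 d n q ξ A.1)) := by
      intro A
      by_cases h : ebar 𝕜 d n q ξ A = 0
      · rw [h]; exact zero_mem _
      · exact Submodule.subset_span ⟨⟨A, h⟩, rfl⟩
    have h1V : (1 : Y 𝕜 d n q) ∈ Submodule.span 𝕜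
        (Set.range (fun A : {A : Setoid (Fin n) // ebar 𝕜 d n q ξ A ≠ 0} =>
          ebar 𝕜 d n q ξ A.1)) := by
      rw [hone]
      exact Submodule.sum_mem _ fun B _ => hVebar B
    have key : ∀ A B : Setoid (Fin n), ebar 𝕜 d n q ξ A * ebar 𝕜 d n q ξ B ∈
        Submodule.span 𝕜
          (Set.range (fun A : {A : Setoid (Fin n) // ebar 𝕜 d n q ξ A ≠ 0} =>
            ebar 𝕜 d n q ξ A.1)) := by
      intro A B
      rw [hmul A B]
      split_ifs
      · exact hVebar A
      · exact zero_mem _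
    have hVmul : ∀ x ∈ Submodule.span 𝕜
        (Set.range (fun A : {A : Setoid (Fin n) // ebar 𝕜 d n q ξ A ≠ 0} =>
          ebar 𝕜 d n q ξ A.1)),
        ∀ y ∈ Submodule.span 𝕜
          (Set.range (fun A : {A : Setoid (Fin n) // ebar 𝕜 d n q ξ A ≠ 0} =>
            ebar 𝕜 d n q ξ A.1)),
        x * y ∈ Submodule.span 𝕜
          (Set.range (fun A : {A : Setoid (Fin n) // ebar 𝕜 d n q ξ A ≠ 0} =>
            ebar 𝕜 d n q ξ A.1)) := by
      intro x hx
      induction hx using Submodule.span_induction with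
      | mem x hxs =>
        intro y hy
        induction hy using Submodule.span_induction with
        | mem y hys =>
          obtain ⟨A, rfl⟩ := hxs
          obtain ⟨B, rfl⟩ := hys
          exact key A.1 B.1
        | zero => rw [mul_zero]; exact zero_mem _
        | add y z hy hz ihy ihz => rw [mul_add]; exact add_mem ihy ihz
        | smul a y hy ihy => rw [mul_smul_comm]; exact Submodule.smul_mem _ _ ihy
      | zero => intro y hy; rw [zero_mul]; exact zero_mem _
      | add x z hx hz ihx ihz => intro y hy; rw [add_mul]; exact add_mem (ihx y hy) (ihz y hy)
      | smul a x hx ihx =>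
        intro y hy
        rw [smul_mul_assoc]
        exact Submodule.smul_mem _ _ (ihx y hy)
    apply le_antisymm
    · rw [Submodule.span_le]
      rintro x ⟨A, rfl⟩
      exact (Subalgebra.mem_toSubmodule _).mpr (hadj A.1)
    · intro x hx
      rw [Subalgebra.mem_toSubmodule] at hx
      induction hx using Algebra.adjoin_induction with
      | mem x hxs =>
        obtain ⟨A, rfl⟩ := hxs
        rw [heSet A]
        exact Submodule.sum_mem _ fun B _ => hVebar B
      | algebraMap r =>
        rw [Algebra.algebraMap_eq_smul_one]
        exact Submodule.smul_mem _ _ h1V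
      | add x y hx hy ihx ihy => exact add_mem ihx ihy
      | mul x y hx hy ihx ihy => exact hVmul x ihx y ihy

end
end
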